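/- arXiv:2304.11854 — 11 statements merged into one kernel-verified Lean document; each statement's English description precedes it below -/
import Mathlib

section
/- Let E be a real normed vector space, x* ∈ E, and let R : E → ℝ be a nonnegative function with C₁·‖x − x*‖² ≤ R(x) ≤ C₂·‖x − x*‖² for all x ∈ E, where C₁, C₂ > 0. For μ > 0 define the Moreau envelope M_μ(x) := ⨅_{u ∈ E} ( R(u) + ‖x − u‖²/(2μ) ). Then for every x ∈ E: (i) M_μ(x) ≤ R(x); (ii) M_μ(x) ≥ ‖x − x*‖² / (1/C₁ + 2μ); and consequently (iii) R(x) ≤ (C₂/C₁ + 2·C₂·μ)·M_μ(x). -/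
/-- sandwich estimate for the Moreau envelope of a function with
quadratic growth. With `M_μ x = ⨅ u, (R u + ‖x - u‖²/(2μ))`:
(i) `M_μ x ≤ R x`; (ii) `M_μ x ≥ ‖x - x*‖²/(1/C₁ + 2μ)`;
(iii) `R x ≤ (C₂/C₁ + 2C₂μ) M_μ x`. -/
theorem moreau_envelope_quadratic_sandwich
    {E : Type*} [NormedAddCommGroup E] [NormedSpace ℝ E]
    (xstar : E) (R : E → ℝ) (hRnonneg : ∀ x, 0 ≤ R x)
    (C₁ C₂ : ℝ) (hC₁ : 0 < C₁) (hC₂ : 0 < C₂)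
    (hlb : ∀ x, C₁ * ‖x - xstar‖ ^ 2 ≤ R x)
    (hub : ∀ x, R x ≤ C₂ * ‖x - xstar‖ ^ 2)
    (μ : ℝ) (hμ : 0 < μ) (x : E) :
    (⨅ u : E, (R u + ‖x - u‖ ^ 2 / (2 * μ))) ≤ R x ∧
    ‖x - xstar‖ ^ 2 / (1 / C₁ + 2 * μ) ≤ (⨅ u : E, (R u + ‖x - u‖ ^ 2 / (2 * μ))) ∧
    R x ≤ (C₂ / C₁ + 2 * C₂ * μ) * (⨅ u : E, (R u + ‖x - u‖ ^ 2 / (2 * μ))) := by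
  have hD : 0 < 1 / C₁ + 2 * μ := by positivity
  have hbdd : BddBelow (Set.range fun u : E => R u + ‖x - u‖ ^ 2 / (2 * μ)) := by
    refine ⟨0, ?_⟩
    rintro _ ⟨u, rfl⟩
    have := hRnonneg u
    positivity
  have h1 : (⨅ u : E, (R u + ‖x - u‖ ^ 2 / (2 * μ))) ≤ R x := by
    have := ciInf_le hbdd x
    simpa using this
  have h2 : ‖x - xstar‖ ^ 2 / (1 / C₁ + 2 * μ) ≤
      (⨅ u : E, (R u + ‖x - u‖ ^ 2 / (2 * μ))) := by
    refine le_ciInf fun u => ?_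
    set a := ‖u - xstar‖ with ha
    set b := ‖x - u‖ with hb
    have ha0 : 0 ≤ a := norm_nonneg _
    have hb0 : 0 ≤ b := norm_nonneg _
    have htri : ‖x - xstar‖ ≤ b + a := by
      calc ‖x - xstar‖ = ‖(x - u) + (u - xstar)‖ := by abel_nf
        _ ≤ b + a := norm_add_le _ _
    have hR : C₁ * a ^ 2 ≤ R u := hlb u
    have hs0 : 0 ≤ ‖x - xstar‖ := norm_nonneg _
    rw [div_le_iff₀ hD]
    have hsq : ‖x - xstar‖ ^ 2 ≤ (b + a) ^ 2 := by nlinarith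
    have hkey : (b + a) ^ 2 ≤ (C₁ * a ^ 2 + b ^ 2 / (2 * μ)) * (1 / C₁ + 2 * μ) := by
      set t := 2 * μ * C₁ with ht'
      have ht : 0 < t := by positivity
      have e : (C₁ * a ^ 2 + b ^ 2 / (2 * μ)) * (1 / C₁ + 2 * μ)
          = a ^ 2 + b ^ 2 + (t * a ^ 2 + b ^ 2 / t) := by
        rw [ht']; field_simp; ring
      have e2 : t * a ^ 2 + b ^ 2 / t - 2 * (a * b) = (t * a - b) ^ 2 / t := by
        field_simp; ring
      have e3 : 0 ≤ (t * a - b) ^ 2 / t := by positivity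
      rw [e]; nlinarith
    calc ‖x - xstar‖ ^ 2 ≤ (b + a) ^ 2 := hsq
      _ ≤ (C₁ * a ^ 2 + b ^ 2 / (2 * μ)) * (1 / C₁ + 2 * μ) := hkey
      _ ≤ (R u + b ^ 2 / (2 * μ)) * (1 / C₁ + 2 * μ) := by nlinarith
  refine ⟨h1, h2, ?_⟩
  have hM : ‖x - xstar‖ ^ 2 ≤ (1 / C₁ + 2 * μ) * (⨅ u : E, (R u + ‖x - u‖ ^ 2 / (2 * μ))) := by
    rw [mul_comm, ← div_le_iff₀ hD]; exact h2
  calc R x ≤ C₂ * ‖x - xstar‖ ^ 2 := hub x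
    _ ≤ C₂ * ((1 / C₁ + 2 * μ) * (⨅ u : E, (R u + ‖x - u‖ ^ 2 / (2 * μ)))) :=
        mul_le_mul_of_nonneg_left hM hC₂.le
    _ = (C₂ / C₁ + 2 * C₂ * μ) * (⨅ u : E, (R u + ‖x - u‖ ^ 2 / (2 * μ))) := by ring
end

section
/- Let E be a real inner product space, F : E → E, and V : E → ℝ a nonnegative function. Let a > 0, c ≥ 1, γ > 0, and let x ∈ E be a point with V(x) > 0 at which V is differentiable with gradient ∇V(x), and suppose ⟪∇V(x), F(x)⟫ ≤ −γ·V(x)^c. Then the function R := V^{2/a} is differentiable at x and ⟪∇R(x), F(x)⟫ ≤ −(2γ/a)·R(x)^{a(c−1)/2 + 1}. -/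
open RealInnerProductSpace

/-- negative drift of the rescaled Lyapunov function `R = V^(2/a)`.
If `V` is differentiable at `x` with `V x > 0` and `⟪∇V x, F x⟫ ≤ -γ (V x)^c`, then
`R := V^(2/a)` is differentiable at `x` and
`⟪∇R x, F x⟫ ≤ -(2γ/a) (R x)^(a(c-1)/2 + 1)`. -/
theorem rescaled_negative_drift
    {E : Type*} [NormedAddCommGroup E] [InnerProductSpace ℝ E] [CompleteSpace E]
    (F : E → E) (V : E → ℝ) (hVnonneg : ∀ y, 0 ≤ V y)
    (a c γ : ℝ) (ha : 0 < a) (hc : 1 ≤ c) (hγ : 0 < γ)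
    (x : E) (hVx : 0 < V x) (hdiff : DifferentiableAt ℝ V x)
    (hdrift : ⟪gradient V x, F x⟫ ≤ -γ * (V x) ^ c) :
    DifferentiableAt ℝ (fun y => (V y) ^ (2 / a)) x ∧
    ⟪gradient (fun y => (V y) ^ (2 / a)) x, F x⟫ ≤
      -(2 * γ / a) * ((V x) ^ (2 / a)) ^ (a * (c - 1) / 2 + 1) := by
  have hfd := hdiff.hasFDerivAt
  have hR : HasFDerivAt (fun y => (V y) ^ (2 / a))
      ((2 / a * (V x) ^ (2 / a - 1)) • fderiv ℝ V x) x :=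
    hfd.rpow_const (Or.inl hVx.ne')
  refine ⟨hR.differentiableAt, ?_⟩
  have hgrad : gradient (fun y => (V y) ^ (2 / a)) x
      = (2 / a * (V x) ^ (2 / a - 1)) • gradient V x := by
    simp [gradient, hR.fderiv, map_smul]
  rw [hgrad, real_inner_smul_left]
  have hk : 0 ≤ 2 / a * (V x) ^ (2 / a - 1) := by positivity
  have h1 : 2 / a * (V x) ^ (2 / a - 1) * ⟪gradient V x, F x⟫
      ≤ 2 / a * (V x) ^ (2 / a - 1) * (-γ * (V x) ^ c) :=
    mul_le_mul_of_nonneg_left hdrift hk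
  refine h1.trans_eq ?_
  rw [← Real.rpow_mul hVx.le]
  have he : 2 / a * (a * (c - 1) / 2 + 1) = (2 / a - 1) + c := by
    field_simp; ring
  rw [he, Real.rpow_add hVx]
  ring
end

section
/- Let E be a real normed vector space, x, x* ∈ E, G_M ≥ 0, and 0 < μ < μ'. Let R : E → ℝ be nonnegative, and for τ > 0 let M_τ(x) := ⨅_{u ∈ E} ( R(u) + ‖x − u‖²/(2τ) ). Suppose that for each τ ∈ [μ, μ'] there is a point u_τ ∈ E attaining the infimum defining M_τ(x), that the map τ ↦ M_τ(x) has derivative −‖x − u_τ‖²/τ² at every τ ∈ [μ, μ'], and that ‖x − u_τ‖ ≤ τ·G_M·‖x − x*‖ for all τ ∈ [μ, μ']. Then M_μ(x) − M_{μ'}(x) ≤ (μ' − μ)·G_M²·‖x − x*‖². -/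
/-- change of smoothness parameter bound for the Moreau envelope.
With `M τ = ⨅ u, (R u + ‖x - u‖²/(2τ))`, if the infimum is attained at `u_τ`, the map
`τ ↦ M τ` has derivative `-‖x - u_τ‖²/τ²` on `[μ, μ']`, and `‖x - u_τ‖ ≤ τ G_M ‖x - x*‖`,
then `M μ - M μ' ≤ (μ' - μ) G_M² ‖x - x*‖²`. -/
theorem moreau_envelope_smoothing_parameter_bound
    {E : Type*} [NormedAddCommGroup E] [NormedSpace ℝ E]
    (x xstar : E) (GM μ μ' : ℝ) (hGM : 0 ≤ GM) (hμ : 0 < μ) (hμμ' : μ < μ')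
    (R : E → ℝ) (hRnonneg : ∀ y, 0 ≤ R y)
    (uτ : ℝ → E)
    (hattain : ∀ τ ∈ Set.Icc μ μ',
      (⨅ u : E, (R u + ‖x - u‖ ^ 2 / (2 * τ))) = R (uτ τ) + ‖x - uτ τ‖ ^ 2 / (2 * τ))
    (hderiv : ∀ τ ∈ Set.Icc μ μ',
      HasDerivAt (fun σ : ℝ => ⨅ u : E, (R u + ‖x - u‖ ^ 2 / (2 * σ)))
        (-(‖x - uτ τ‖ ^ 2 / τ ^ 2)) τ)
    (hbound : ∀ τ ∈ Set.Icc μ μ', ‖x - uτ τ‖ ≤ τ * GM * ‖x - xstar‖) :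
    (⨅ u : E, (R u + ‖x - u‖ ^ 2 / (2 * μ))) - (⨅ u : E, (R u + ‖x - u‖ ^ 2 / (2 * μ'))) ≤
      (μ' - μ) * GM ^ 2 * ‖x - xstar‖ ^ 2 := by
  set f : ℝ → ℝ := fun σ : ℝ => ⨅ u : E, (R u + ‖x - u‖ ^ 2 / (2 * σ)) with hf
  have key : ‖f μ' - f μ‖ ≤ (GM ^ 2 * ‖x - xstar‖ ^ 2) * ‖μ' - μ‖ := by
    apply Convex.norm_image_sub_le_of_norm_hasDerivWithin_le
      (f' := fun τ => -(‖x - uτ τ‖ ^ 2 / τ ^ 2))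
      (fun τ hτ => (hderiv τ hτ).hasDerivWithinAt) ?_ (convex_Icc μ μ')
      (Set.left_mem_Icc.2 hμμ'.le) (Set.right_mem_Icc.2 hμμ'.le)
    intro τ hτ
    have hτpos : 0 < τ := lt_of_lt_of_le hμ hτ.1
    have h1 : ‖x - uτ τ‖ ^ 2 ≤ (τ * GM * ‖x - xstar‖) ^ 2 :=
      pow_le_pow_left₀ (norm_nonneg _) (hbound τ hτ) 2
    have h2 : ‖x - uτ τ‖ ^ 2 / τ ^ 2 ≤ GM ^ 2 * ‖x - xstar‖ ^ 2 := by
      rw [div_le_iff₀ (by positivity)]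
      calc ‖x - uτ τ‖ ^ 2 ≤ (τ * GM * ‖x - xstar‖) ^ 2 := h1
        _ = GM ^ 2 * ‖x - xstar‖ ^ 2 * τ ^ 2 := by ring
    rw [norm_neg, Real.norm_eq_abs, abs_of_nonneg (by positivity)]
    exact h2
  have h3 : f μ - f μ' ≤ ‖f μ' - f μ‖ := by
    rw [norm_sub_rev, Real.norm_eq_abs]
    exact le_abs_self _
  calc f μ - f μ' ≤ ‖f μ' - f μ‖ := h3
    _ ≤ (GM ^ 2 * ‖x - xstar‖ ^ 2) * ‖μ' - μ‖ := key
    _ = (μ' - μ) * GM ^ 2 * ‖x - xstar‖ ^ 2 := by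
        rw [Real.norm_eq_abs, abs_of_nonneg (by linarith)]; ring
end

section
/- Let E be a real inner product space, x* ∈ E, and R : E → ℝ nonnegative with C₁·‖y − x*‖² ≤ R(y) ≤ C₂·‖y − x*‖² for all y ∈ E (C₁, C₂ > 0). Let F : E → E satisfy ‖F(y) − F(z)‖ ≤ C·‖y − z‖ for all y, z ∈ E. Let μ > 0, γ_R > 0, G_M ≥ 0, γ_M > 0 be such that −γ_R·C₁/(1 + μ·G_M)² + μ·C·G_M² ≤ −γ_M·C₂. Fix x ∈ E and let u ∈ E attain the infimum defining M_μ(x) := ⨅_{v ∈ E}(R(v) + ‖x − v‖²/(2μ)); set g := (x − u)/μ. Assume ⟪g, F(u)⟫ ≤ −γ_R·R(u), ‖g‖ ≤ G_M·‖u − x*‖, and ‖u − x*‖ ≤ ‖x − x*‖. Then ⟪g, F(x)⟫ ≤ −γ_M·M_μ(x). -/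
open RealInnerProductSpace

set_option maxHeartbeats 1000000 in
/-- negative drift of the Moreau envelope, exponential case.
With `u` attaining the infimum defining `M_μ x` and `g = (x - u)/μ`, the hypotheses
`⟪g, F u⟫ ≤ -γ_R R u`, `‖g‖ ≤ G_M ‖u - x*‖`, `‖u - x*‖ ≤ ‖x - x*‖`, and the parameter
condition `-γ_R C₁/(1 + μ G_M)² + μ C G_M² ≤ -γ_M C₂` yield `⟪g, F x⟫ ≤ -γ_M M_μ x`. -/
theorem moreau_negative_drift_exponential
    {E : Type*} [NormedAddCommGroup E] [InnerProductSpace ℝ E]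
    (xstar : E) (R : E → ℝ) (hRnonneg : ∀ y, 0 ≤ R y)
    (C₁ C₂ C : ℝ) (hC₁ : 0 < C₁) (hC₂ : 0 < C₂)
    (hlb : ∀ y, C₁ * ‖y - xstar‖ ^ 2 ≤ R y)
    (hub : ∀ y, R y ≤ C₂ * ‖y - xstar‖ ^ 2)
    (F : E → E) (hF : ∀ y z, ‖F y - F z‖ ≤ C * ‖y - z‖)
    (μ γR GM γM : ℝ) (hμ : 0 < μ) (hγR : 0 < γR) (hGM : 0 ≤ GM) (hγM : 0 < γM)
    (hparam : -γR * C₁ / (1 + μ * GM) ^ 2 + μ * C * GM ^ 2 ≤ -γM * C₂)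
    (x u : E)
    (hattain : (⨅ v : E, (R v + ‖x - v‖ ^ 2 / (2 * μ))) = R u + ‖x - u‖ ^ 2 / (2 * μ))
    (hdrift : ⟪μ⁻¹ • (x - u), F u⟫ ≤ -γR * R u)
    (hgrad : ‖μ⁻¹ • (x - u)‖ ≤ GM * ‖u - xstar‖)
    (hnonexp : ‖u - xstar‖ ≤ ‖x - xstar‖) :
    ⟪μ⁻¹ • (x - u), F x⟫ ≤ -γM * (⨅ v : E, (R v + ‖x - v‖ ^ 2 / (2 * μ))) := by
  rw [hattain]
  rcases subsingleton_or_nontrivial E with hE | hE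
  · have hxu : x = u := Subsingleton.elim x u
    have hux : u = xstar := Subsingleton.elim u xstar
    have hRu0 : R u ≤ 0 := by
      have h := hub u
      have hn : ‖u - xstar‖ = 0 := by rw [hux]; simp
      rw [hn] at h
      simpa using h
    have hRu : R u = 0 := le_antisymm hRu0 (hRnonneg u)
    simp [hxu, hRu]
  · -- C ≥ 0
    obtain ⟨y, z, hyz⟩ := exists_pair_ne E
    have hyz' : (0:ℝ) < ‖y - z‖ := by
      rw [norm_pos_iff]; exact sub_ne_zero_of_ne hyz
    have hC : 0 ≤ C := by
      have h1 := hF y z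
      have h2 : (0:ℝ) ≤ ‖F y - F z‖ := norm_nonneg _
      nlinarith
    set g := μ⁻¹ • (x - u) with hg
    have hng : 0 ≤ ‖g‖ := norm_nonneg _
    have hnxu : ‖x - u‖ = μ * ‖g‖ := by
      rw [hg, norm_smul, norm_inv, Real.norm_eq_abs, abs_of_pos hμ]
      field_simp
    -- split the inner product
    have hsplit : ⟪g, F x⟫ = ⟪g, F u⟫ + ⟪g, F x - F u⟫ := by
      rw [inner_sub_right]; ring
    have hcs : ⟪g, F x - F u⟫ ≤ ‖g‖ * (C * ‖x - u‖) := by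
      calc ⟪g, F x - F u⟫ ≤ ‖g‖ * ‖F x - F u‖ := real_inner_le_norm _ _
        _ ≤ ‖g‖ * (C * ‖x - u‖) := by
            exact mul_le_mul_of_nonneg_left (hF x u) hng
    set t := ‖u - xstar‖ with ht
    set s := ‖x - xstar‖ with hs
    have hts : 0 ≤ t := norm_nonneg _
    have hss : 0 ≤ s := norm_nonneg _
    -- triangle: s ≤ μ‖g‖ + t ≤ (1 + μ GM) t
    have htri : s ≤ ‖x - u‖ + t := norm_sub_le_norm_sub_add_norm_sub x u xstar
    have hstep : s ≤ (1 + μ * GM) * t := by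
      have : ‖x - u‖ ≤ μ * (GM * t) := by
        rw [hnxu]
        exact mul_le_mul_of_nonneg_left hgrad hμ.le
      nlinarith
    have hden : (0:ℝ) < (1 + μ * GM) ^ 2 := by positivity
    -- R u ≥ C₁ t² ≥ C₁ s² / (1+μGM)²
    have hRu_lb : C₁ * s ^ 2 / (1 + μ * GM) ^ 2 ≤ R u := by
      have h1 : C₁ * t ^ 2 ≤ R u := hlb u
      have h2 : s ^ 2 ≤ ((1 + μ * GM) * t) ^ 2 := by nlinarith
      rw [div_le_iff₀ hden]
      nlinarith
    -- Moreau envelope ≤ R x ≤ C₂ s²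
    have hMle : R u + ‖x - u‖ ^ 2 / (2 * μ) ≤ C₂ * s ^ 2 := by
      have hbdd : BddBelow (Set.range fun v : E => R v + ‖x - v‖ ^ 2 / (2 * μ)) := by
        refine ⟨0, ?_⟩
        rintro _ ⟨v, rfl⟩
        have := hRnonneg v
        positivity
      have h1 : (⨅ v : E, (R v + ‖x - v‖ ^ 2 / (2 * μ))) ≤ R x + ‖x - x‖ ^ 2 / (2 * μ) :=
        ciInf_le hbdd x
      rw [hattain] at h1
      have h2 : R x ≤ C₂ * s ^ 2 := hub x
      simp only [sub_self, norm_zero] at h1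
      calc R u + ‖x - u‖ ^ 2 / (2 * μ) ≤ R x + 0 ^ 2 / (2 * μ) := h1
        _ ≤ C₂ * s ^ 2 := by simpa using h2
    have hM0 : 0 ≤ R u + ‖x - u‖ ^ 2 / (2 * μ) := by
      have := hRnonneg u; positivity
    -- main chain
    set q := -γR * C₁ / (1 + μ * GM) ^ 2 with hq
    have h1 : ⟪g, F x⟫ ≤ -γR * R u + ‖g‖ * (C * (μ * ‖g‖)) := by
      rw [hsplit, ← hnxu]
      exact add_le_add hdrift hcs
    have h2 : ‖g‖ ^ 2 ≤ (GM * t) ^ 2 := by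
      have := pow_le_pow_left₀ hng hgrad 2
      simpa using this
    have h3 : -γR * R u ≤ q * s ^ 2 := by
      have hm := mul_le_mul_of_nonneg_left hRu_lb hγR.le
      have heq : q * s ^ 2 = -(γR * (C₁ * s ^ 2 / (1 + μ * GM) ^ 2)) := by
        rw [hq]; ring
      linarith
    have h4 : μ * C * ‖g‖ ^ 2 ≤ μ * C * GM ^ 2 * s ^ 2 := by
      have hgs : GM * t ≤ GM * s := mul_le_mul_of_nonneg_left hnonexp hGM
      have h2' : ‖g‖ ^ 2 ≤ (GM * s) ^ 2 :=
        le_trans h2 (pow_le_pow_left₀ (by positivity) hgs 2)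
      have hm := mul_le_mul_of_nonneg_left h2' (mul_nonneg hμ.le hC)
      have heq : μ * C * (GM * s) ^ 2 = μ * C * GM ^ 2 * s ^ 2 := by ring
      linarith
    have h6 : q * s ^ 2 + μ * C * GM ^ 2 * s ^ 2 ≤ -γM * C₂ * s ^ 2 := by
      have hm := mul_le_mul_of_nonneg_right hparam (sq_nonneg s)
      have heq : (q + μ * C * GM ^ 2) * s ^ 2 = q * s ^ 2 + μ * C * GM ^ 2 * s ^ 2 := by ring
      have heq2 : (-γM * C₂) * s ^ 2 = -γM * C₂ * s ^ 2 := by ring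
      rw [hq]
      nlinarith [hm]
    have h7 : ‖g‖ * (C * (μ * ‖g‖)) = μ * C * ‖g‖ ^ 2 := by ring
    have hkey : ⟪g, F x⟫ ≤ -γM * C₂ * s ^ 2 := by linarith
    have hlast : -γM * C₂ * s ^ 2 ≤ -γM * (R u + ‖x - u‖ ^ 2 / (2 * μ)) := by
      have hm := mul_le_mul_of_nonneg_left hMle hγM.le
      linarith
    linarith
end

section
/- Let E be a real inner product space, x* ∈ E, and R : E → ℝ nonnegative with C₁·‖y − x*‖² ≤ R(y) ≤ C₂·‖y − x*‖² for all y ∈ E (C₁, C₂ > 0). Let F : E → E satisfy ‖F(y) − F(z)‖ ≤ C·‖y − z‖ for all y, z. Let μ > 0, γ' > 0, G_M ≥ 0 and d ≥ 1. Fix x ∈ E and let u ∈ E attain the infimum defining M_μ(x) := ⨅_{v ∈ E}(R(v) + ‖x − v‖²/(2μ)); set g := (x − u)/μ. Assume ⟪g, F(u)⟫ ≤ −γ'·R(u)^d, ‖g‖ ≤ G_M·‖u − x*‖, and ‖u − x*‖ ≤ ‖x − x*‖. Then ⟪g, F(x)⟫ ≤ −( γ'·(C₁/C₂)^d / (1 +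 μ·G_M)^{2d} )·M_μ(x)^d + μ·C·G_M²·(1/C₁ + 2μ)·M_μ(x). -/
open RealInnerProductSpace

set_option maxHeartbeats 1000000 in
/-- drift of the Moreau envelope, sub-exponential case.
With `u` attaining the infimum defining `M_μ x` and `g = (x - u)/μ`, the hypotheses
`⟪g, F u⟫ ≤ -γ' (R u)^d`, `‖g‖ ≤ G_M ‖u - x*‖`, `‖u - x*‖ ≤ ‖x - x*‖` yield
`⟪g, F x⟫ ≤ -(γ' (C₁/C₂)^d/(1 + μ G_M)^(2d)) (M_μ x)^d + μ C G_M² (1/C₁ + 2μ) M_μ x`. -/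
theorem moreau_negative_drift_subexponential
    {E : Type*} [NormedAddCommGroup E] [InnerProductSpace ℝ E]
    (xstar : E) (R : E → ℝ) (hRnonneg : ∀ y, 0 ≤ R y)
    (C₁ C₂ C : ℝ) (hC₁ : 0 < C₁) (hC₂ : 0 < C₂)
    (hlb : ∀ y, C₁ * ‖y - xstar‖ ^ 2 ≤ R y)
    (hub : ∀ y, R y ≤ C₂ * ‖y - xstar‖ ^ 2)
    (F : E → E) (hF : ∀ y z, ‖F y - F z‖ ≤ C * ‖y - z‖)
    (μ γ' GM d : ℝ) (hμ : 0 < μ) (hγ' : 0 < γ') (hGM : 0 ≤ GM) (hd : 1 ≤ d)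
    (x u : E)
    (hattain : (⨅ v : E, (R v + ‖x - v‖ ^ 2 / (2 * μ))) = R u + ‖x - u‖ ^ 2 / (2 * μ))
    (hdrift : ⟪μ⁻¹ • (x - u), F u⟫ ≤ -γ' * (R u) ^ d)
    (hgrad : ‖μ⁻¹ • (x - u)‖ ≤ GM * ‖u - xstar‖)
    (hnonexp : ‖u - xstar‖ ≤ ‖x - xstar‖) :
    ⟪μ⁻¹ • (x - u), F x⟫ ≤
      -(γ' * (C₁ / C₂) ^ d / (1 + μ * GM) ^ (2 * d)) *
          (⨅ v : E, (R v + ‖x - v‖ ^ 2 / (2 * μ))) ^ d +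
        μ * C * GM ^ 2 * (1 / C₁ + 2 * μ) * (⨅ v : E, (R v + ‖x - v‖ ^ 2 / (2 * μ))) := by
  have hd0 : (0:ℝ) ≤ d := le_trans zero_le_one hd
  have hdne : d ≠ 0 := by linarith
  have h1μ : (0:ℝ) < 1 + μ * GM := by nlinarith
  -- lower bound / infimum facts
  have hbdd : BddBelow (Set.range fun v : E => R v + ‖x - v‖ ^ 2 / (2 * μ)) := by
    refine ⟨0, ?_⟩
    rintro _ ⟨v, rfl⟩
    have := hRnonneg v
    positivity
  have hMleRx : (⨅ v : E, (R v + ‖x - v‖ ^ 2 / (2 * μ))) ≤ R x := by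
    have h := ciInf_le hbdd x
    simpa using h
  rw [hattain] at hMleRx ⊢
  set M : ℝ := R u + ‖x - u‖ ^ 2 / (2 * μ) with hMdef
  have hM0 : 0 ≤ M := by
    have := hRnonneg u
    positivity
  have hRuM : R u ≤ M := by
    have h : 0 ≤ ‖x - u‖ ^ 2 / (2 * μ) := by positivity
    exact le_add_of_nonneg_right h
  have hgnorm : ‖μ⁻¹ • (x - u)‖ = μ⁻¹ * ‖x - u‖ := by
    rw [norm_smul, Real.norm_eq_abs, abs_of_pos (inv_pos.mpr hμ)]
  clear_value M
  by_cases hC : 0 ≤ C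
  · -- main case
    have hgrad' : μ⁻¹ * ‖x - u‖ ≤ GM * ‖u - xstar‖ := by rwa [hgnorm] at hgrad
    have hxu : ‖x - u‖ ≤ μ * GM * ‖u - xstar‖ := by
      have h := mul_le_mul_of_nonneg_left hgrad' hμ.le
      calc ‖x - u‖ = μ * (μ⁻¹ * ‖x - u‖) := by field_simp
        _ ≤ μ * (GM * ‖u - xstar‖) := h
        _ = μ * GM * ‖u - xstar‖ := by ring
    have htri : ‖x - xstar‖ ≤ (1 + μ * GM) * ‖u - xstar‖ := by
      calc ‖x - xstar‖ = ‖(x - u) + (u - xstar)‖ := by abel_nf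
        _ ≤ ‖x - u‖ + ‖u - xstar‖ := norm_add_le _ _
        _ ≤ μ * GM * ‖u - xstar‖ + ‖u - xstar‖ := by linarith
        _ = (1 + μ * GM) * ‖u - xstar‖ := by ring
    have hMup : M ≤ C₂ * (1 + μ * GM) ^ 2 * ‖u - xstar‖ ^ 2 := by
      have h1 : R x ≤ C₂ * ‖x - xstar‖ ^ 2 := hub x
      have h2 : ‖x - xstar‖ ^ 2 ≤ ((1 + μ * GM) * ‖u - xstar‖) ^ 2 := by
        nlinarith [norm_nonneg (x - xstar), norm_nonneg (u - xstar)]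
      nlinarith
    have husq : C₁ * ‖u - xstar‖ ^ 2 ≤ M := le_trans (hlb u) hRuM
    -- key : K * M ≤ R u
    set K : ℝ := C₁ / (C₂ * (1 + μ * GM) ^ 2) with hKdef
    have hK0 : 0 < K := by positivity
    have hKM : K * M ≤ R u := by
      rw [hKdef, div_mul_eq_mul_div, div_le_iff₀ (by positivity)]
      have hA : (0:ℝ) ≤ C₂ * (1 + μ * GM) ^ 2 := by positivity
      nlinarith [mul_le_mul_of_nonneg_left hMup hC₁.le,
        mul_le_mul_of_nonneg_left (hlb u) hA]
    have hrpow : ((C₁ / C₂) ^ d / (1 + μ * GM) ^ (2 * d)) * M ^ d ≤ R u ^ d := by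
      have h1 : (K * M) ^ d ≤ R u ^ d :=
        Real.rpow_le_rpow (by positivity) hKM hd0
      have h2 : (K * M) ^ d = K ^ d * M ^ d := Real.mul_rpow hK0.le hM0
      have h3 : K ^ d = (C₁ / C₂) ^ d / (1 + μ * GM) ^ (2 * d) := by
        have hKeq : K = (C₁ / C₂) / (1 + μ * GM) ^ 2 := by
          rw [hKdef]; field_simp
        rw [hKeq, Real.div_rpow (by positivity) (by positivity)]
        congr 1
        rw [← Real.rpow_natCast (1 + μ * GM) 2, ← Real.rpow_mul h1μ.le]
        norm_num
      rw [h2, h3] at h1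
      exact h1
    -- inner product split
    have hsplit : ⟪μ⁻¹ • (x - u), F x⟫
        = ⟪μ⁻¹ • (x - u), F u⟫ + ⟪μ⁻¹ • (x - u), F x - F u⟫ := by
      rw [← inner_add_right]
      congr 1
      abel
    have hcs : ⟪μ⁻¹ • (x - u), F x - F u⟫ ≤ C * (μ⁻¹ * ‖x - u‖ ^ 2) := by
      calc ⟪μ⁻¹ • (x - u), F x - F u⟫ ≤ ‖μ⁻¹ • (x - u)‖ * ‖F x - F u‖ :=
            real_inner_le_norm _ _
        _ ≤ ‖μ⁻¹ • (x - u)‖ * (C * ‖x - u‖) :=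
            mul_le_mul_of_nonneg_left (hF x u) (norm_nonneg _)
        _ = C * (μ⁻¹ * ‖x - u‖ ^ 2) := by rw [hgnorm]; ring
    have hterm2 : C * (μ⁻¹ * ‖x - u‖ ^ 2) ≤ μ * C * GM ^ 2 * (1 / C₁ + 2 * μ) * M := by
      have hxu2 : ‖x - u‖ ^ 2 ≤ μ ^ 2 * GM ^ 2 * ‖u - xstar‖ ^ 2 := by
        have h := pow_le_pow_left₀ (norm_nonneg (x - u)) hxu 2
        have h2 : (μ * GM * ‖u - xstar‖) ^ 2 = μ ^ 2 * GM ^ 2 * ‖u - xstar‖ ^ 2 := by ring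
        rw [h2] at h
        exact h
      have husq' : ‖u - xstar‖ ^ 2 ≤ M / C₁ := by
        rw [le_div_iff₀ hC₁]; linarith [husq]
      have h1 : C * (μ⁻¹ * ‖x - u‖ ^ 2) ≤ C * (μ⁻¹ * (μ ^ 2 * GM ^ 2 * (M / C₁))) := by
        have : ‖x - u‖ ^ 2 ≤ μ ^ 2 * GM ^ 2 * (M / C₁) := by
          nlinarith [hxu2, mul_le_mul_of_nonneg_left husq'
            (by positivity : (0:ℝ) ≤ μ ^ 2 * GM ^ 2)]
        have h2 : μ⁻¹ * ‖x - u‖ ^ 2 ≤ μ⁻¹ * (μ ^ 2 * GM ^ 2 * (M / C₁)) :=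
          mul_le_mul_of_nonneg_left this (inv_pos.mpr hμ).le
        exact mul_le_mul_of_nonneg_left h2 hC
      have heq : C * (μ⁻¹ * (μ ^ 2 * GM ^ 2 * (M / C₁))) = μ * C * GM ^ 2 * (1 / C₁) * M := by
        field_simp
      have h3 : μ * C * GM ^ 2 * (1 / C₁) * M ≤ μ * C * GM ^ 2 * (1 / C₁ + 2 * μ) * M := by
        nlinarith [mul_nonneg (mul_nonneg (mul_nonneg hμ.le hC) (sq_nonneg GM)) hM0]
      linarith [heq ▸ h1]
    have hdrift' : ⟪μ⁻¹ • (x - u), F u⟫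
        ≤ -(γ' * (C₁ / C₂) ^ d / (1 + μ * GM) ^ (2 * d)) * M ^ d := by
      have h := mul_le_mul_of_nonneg_left hrpow hγ'.le
      calc ⟪μ⁻¹ • (x - u), F u⟫ ≤ -γ' * R u ^ d := hdrift
        _ ≤ -(γ' * (C₁ / C₂) ^ d / (1 + μ * GM) ^ (2 * d)) * M ^ d := by
          have h' : γ' * (((C₁ / C₂) ^ d / (1 + μ * GM) ^ (2 * d)) * M ^ d) ≤ γ' * R u ^ d := h
          have heq2 : -(γ' * (C₁ / C₂) ^ d / (1 + μ * GM) ^ (2 * d)) * M ^ d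
              = -(γ' * (((C₁ / C₂) ^ d / (1 + μ * GM) ^ (2 * d)) * M ^ d)) := by ring
          rw [heq2]
          linarith [h']
    rw [hsplit]
    linarith
  · -- degenerate case: E is a subsingleton
    push_neg at hC
    have hsub : ∀ y z : E, y = z := by
      intro y z
      by_contra hne
      have h1 := hF y z
      have h2 : 0 < ‖y - z‖ := by
        rw [norm_pos_iff, sub_ne_zero]; exact hne
      nlinarith [norm_nonneg (F y - F z)]
    have hux : x = u := hsub x u
    have hxs : u = xstar := hsub u xstar
    have hzero : x - u = 0 := by rw [hux, sub_self]
    have hRu : R u = 0 := by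
      have hn : ‖u - xstar‖ = 0 := by rw [hxs, sub_self, norm_zero]
      have h1 := hub u
      rw [hn] at h1
      have h2 := hRnonneg u
      norm_num at h1
      linarith
    have hMz : M = 0 := by
      rw [hMdef, hRu, hzero]
      simp
    rw [hzero, hMz, Real.zero_rpow hdne]
    simp
end

section
/- Let α, γ > 0 with α·γ < 2, and let K ≥ 1 be a real number with α·γ/2 ≤ K. Then for every natural number k, ∑_{i=0}^{k−1} ( α/(i + K) )² · ∏_{j=i+1}^{k−1} ( 1 − α·γ/(2(j + K)) ) ≤ ( 8α²/(2 − αγ) ) · (k + K)^{−αγ/2}. -/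
/-!
Write `c = αγ/2 ∈ [0, 1)`. Both estimates come from the tangent-line inequality for the convex
function `x ↦ x ^ (-q)`, `q ≥ 0`, on `(0, ∞)`. At `x = j + K` with `q = c` it gives
`(j + K) ^ (-c) * (1 - c / (j + K)) ≤ (j + 1 + K) ^ (-c)`, so the tail product telescopes to at most
`((i + 1 + K) / (k + K)) ^ c`; as `i + 1 + K ≤ 2 (i + K)`, the `i`-th summand is at most
`4 α² (k + K) ^ (-c) (i + 1 + K) ^ (c - 2)`. At `x = i + 1 + K` with `q = 1 - c` it gives
`(1 - c) (i + 1 + K) ^ (c - 2) ≤ (i + K) ^ (c - 1) - (i + 1 + K) ^ (c - 1)`, so the remaining sum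
telescopes to at most `K ^ (c - 1) / (1 - c) ≤ 2 / (2 - αγ)`.
-/

open Real Finset

theorem one_add_mul_one_sub_le_rpow_neg {t q : ℝ} (ht : 0 < t) (hq : 0 ≤ q) :
    1 + q * (1 - t) ≤ t ^ (-q) := by
  have hlog : q * (1 - t) ≤ log t * -q := by nlinarith [log_le_sub_one_of_pos ht]
  rw [rpow_def_of_pos ht]
  linarith [add_one_le_exp (log t * -q)]

theorem rpow_neg_sub_mul_le_rpow_neg {x y q : ℝ} (hx : 0 < x) (hy : 0 < y) (hq : 0 ≤ q) :
    x ^ (-q) - q * x ^ (-q - 1) * (y - x) ≤ y ^ (-q) := by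
  have hxq : 0 < x ^ (-q) := rpow_pos_of_pos hx _
  have hsplit : y ^ (-q) = x ^ (-q) * (y / x) ^ (-q) := by
    rw [div_rpow hy.le hx.le, mul_div_cancel₀ _ hxq.ne']
  have hpred : x ^ (-q - 1) = x ^ (-q) / x := by
    rw [rpow_sub hx, rpow_one]
  calc x ^ (-q) - q * x ^ (-q - 1) * (y - x) = x ^ (-q) * (1 + q * (1 - y / x)) := by
        rw [hpred]; field_simp; ring
    _ ≤ x ^ (-q) * (y / x) ^ (-q) :=
        mul_le_mul_of_nonneg_left (one_add_mul_one_sub_le_rpow_neg (by positivity) hq) hxq.le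
    _ = y ^ (-q) := hsplit.symm

theorem prod_Ico_one_sub_div_le {K c : ℝ} (hK : 0 < K) (hc0 : 0 ≤ c) (hcK : c ≤ K)
    {m n : ℕ} (hmn : m ≤ n) :
    ∏ j ∈ Ico m n, (1 - c / ((j : ℝ) + K)) ≤ ((m : ℝ) + K) ^ c * ((n : ℝ) + K) ^ (-c) := by
  induction n, hmn using Nat.le_induction with
  | base => rw [Ico_self, prod_empty, ← rpow_add (by positivity), add_neg_cancel, rpow_zero]
  | succ n hmn ih =>
    have hn : 0 < (n : ℝ) + K := by positivity
    have hstep : ((n : ℝ) + K) ^ (-c) * (1 - c / ((n : ℝ) + K)) ≤ ((n : ℝ) + 1 + K) ^ (-c) := by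
      have h := rpow_neg_sub_mul_le_rpow_neg hn (by positivity : 0 < (n : ℝ) + K + 1) hc0
      rw [rpow_sub hn, rpow_one] at h
      convert h using 1 <;> ring_nf
    have hfactor : 0 ≤ 1 - c / ((n : ℝ) + K) := by
      rw [sub_nonneg, div_le_one hn]; linarith [n.cast_nonneg (α := ℝ)]
    rw [prod_Ico_succ_top hmn, Nat.cast_succ]
    calc (∏ j ∈ Ico m n, (1 - c / ((j : ℝ) + K))) * (1 - c / ((n : ℝ) + K))
        ≤ ((m : ℝ) + K) ^ c * ((n : ℝ) + K) ^ (-c) * (1 - c / ((n : ℝ) + K)) :=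
          mul_le_mul_of_nonneg_right ih hfactor
      _ ≤ ((m : ℝ) + K) ^ c * ((n : ℝ) + 1 + K) ^ (-c) := by
          rw [mul_assoc]; gcongr

theorem sum_range_rpow_neg_sub_one_le {a q : ℝ} (ha : 0 < a) (hq : 0 < q) (k : ℕ) :
    ∑ i ∈ range k, ((i : ℝ) + 1 + a) ^ (-q - 1) ≤ a ^ (-q) / q := by
  set f : ℕ → ℝ := fun i ↦ ((i : ℝ) + a) ^ (-q)
  have hstep : ∀ i ∈ range k, q * ((i : ℝ) + 1 + a) ^ (-q - 1) ≤ f i - f (i + 1) := by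
    intro i _
    have h := rpow_neg_sub_mul_le_rpow_neg (by positivity : 0 < (i : ℝ) + 1 + a)
      (by positivity : 0 < (i : ℝ) + a) hq.le
    simp only [f, Nat.cast_succ]
    linarith [show (i : ℝ) + 1 + a = (i : ℝ) + a + 1 by ring]
  rw [le_div_iff₀' hq, mul_sum]
  calc ∑ i ∈ range k, q * ((i : ℝ) + 1 + a) ^ (-q - 1)
      ≤ ∑ i ∈ range k, (f i - f (i + 1)) := sum_le_sum hstep
    _ = f 0 - f k := sum_range_sub' f k
    _ ≤ a ^ (-q) := by
        simp only [f, Nat.cast_zero, zero_add]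
        linarith [rpow_pos_of_pos (by positivity : 0 < (k : ℝ) + a) (-q)]

theorem sq_div_mul_prod_Ico_one_sub_div_le (α : ℝ) {K c : ℝ} (hK : 1 ≤ K) (hc0 : 0 ≤ c)
    (hcK : c ≤ K) {i k : ℕ} (hik : i < k) :
    (α / ((i : ℝ) + K)) ^ 2 * ∏ j ∈ Ico (i + 1) k, (1 - c / ((j : ℝ) + K)) ≤
      4 * α ^ 2 * ((k : ℝ) + K) ^ (-c) * ((i : ℝ) + 1 + K) ^ (c - 2) := by
  have hi : 1 ≤ (i : ℝ) + K := by linarith [i.cast_nonneg (α := ℝ)]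
  have hi' : 0 < (i : ℝ) + 1 + K := by linarith
  have hcoeff : (α / ((i : ℝ) + K)) ^ 2 ≤ 4 * α ^ 2 / ((i : ℝ) + 1 + K) ^ 2 := by
    rw [div_pow, div_le_div_iff₀ (by positivity) (by positivity)]
    have h2 : ((i : ℝ) + 1 + K) ^ 2 ≤ (2 * ((i : ℝ) + K)) ^ 2 := by gcongr; linarith
    nlinarith [mul_le_mul_of_nonneg_left h2 (sq_nonneg α)]
  have hprod := prod_Ico_one_sub_div_le (by linarith) hc0 hcK hik
  push_cast at hprod
  calc (α / ((i : ℝ) + K)) ^ 2 * ∏ j ∈ Ico (i + 1) k, (1 - c / ((j : ℝ) + K))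
      ≤ 4 * α ^ 2 / ((i : ℝ) + 1 + K) ^ 2 * (((i : ℝ) + 1 + K) ^ c * ((k : ℝ) + K) ^ (-c)) := by
        gcongr
        exact prod_nonneg fun j _ ↦ sub_nonneg.2 <| (div_le_one (by positivity)).2 <| by
          linarith [j.cast_nonneg (α := ℝ)]
    _ = 4 * α ^ 2 * ((k : ℝ) + K) ^ (-c) * ((i : ℝ) + 1 + K) ^ (c - 2) := by
        rw [rpow_sub hi', rpow_two]; ring

/-- variance-sum bound, stepsize `α_k = α/(k+K)`, regime `αγ < 2`. -/
theorem variance_sum_bound_xi_one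
    (α γ K : ℝ) (hα : 0 < α) (hγ : 0 < γ) (hαγ : α * γ < 2) (hK : 1 ≤ K)
    (hαγK : α * γ / 2 ≤ K) (k : ℕ) :
    ∑ i ∈ Finset.range k,
        (α / ((i : ℝ) + K)) ^ 2 *
          ∏ j ∈ Finset.Ico (i + 1) k, (1 - α * γ / (2 * ((j : ℝ) + K))) ≤
      (8 * α ^ 2 / (2 - α * γ)) * ((k : ℝ) + K) ^ (-(α * γ / 2)) := by
  set c := α * γ / 2
  have hc0 : 0 ≤ c := by positivity
  have hq : 0 < 1 - c := by simp only [c]; linarith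
  set B := 4 * α ^ 2 * ((k : ℝ) + K) ^ (-c)
  calc ∑ i ∈ range k, (α / ((i : ℝ) + K)) ^ 2 *
          ∏ j ∈ Ico (i + 1) k, (1 - α * γ / (2 * ((j : ℝ) + K)))
      = ∑ i ∈ range k, (α / ((i : ℝ) + K)) ^ 2 *
          ∏ j ∈ Ico (i + 1) k, (1 - c / ((j : ℝ) + K)) := by
        simp only [c, div_div]
    _ ≤ ∑ i ∈ range k, B * ((i : ℝ) + 1 + K) ^ (-(1 - c) - 1) := by
        refine sum_le_sum fun i hi ↦ ?_
        rw [show -(1 - c) - 1 = c - 2 by ring]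
        exact sq_div_mul_prod_Ico_one_sub_div_le α hK hc0 hαγK (mem_range.1 hi)
    _ ≤ B * (K ^ (-(1 - c)) / (1 - c)) := by
        rw [← mul_sum]
        gcongr
        exact sum_range_rpow_neg_sub_one_le (by linarith) hq k
    _ ≤ B * (1 / (1 - c)) := by
        gcongr
        exact rpow_le_one_of_one_le_of_nonpos hK (by linarith)
    _ = (8 * α ^ 2 / (2 - α * γ)) * ((k : ℝ) + K) ^ (-c) := by
        simp only [B, c]; field_simp; ring
end

section
/- Let α, γ > 0, ξ ∈ (0,1), and let K be a real number with K ≥ 1, K ≥ (4ξ/(αγ))^{1/(1−ξ)}, and γ·α/(2K^ξ) ≤ 1. Define α_k := α/(k + K)^ξ and the sequence u₀ = 0, u_{k+1} = (1 − γ·α_k/2)·u_k + α_k². Then u_k ≤ (4α/γ)·(k + K)^{−ξ} for all natural numbers k. -/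
open Real
set_option maxHeartbeats 1000000

/-- induction lemma for the auxiliary sequence dominating the
variance sum, stepsizes `α_k = α/(k+K)^ξ`, ξ ∈ (0,1). -/
theorem auxiliary_sequence_bound_exponential
    (α γ ξ K : ℝ) (hα : 0 < α) (hγ : 0 < γ) (hξ : ξ ∈ Set.Ioo (0 : ℝ) 1)
    (hK1 : 1 ≤ K) (hK2 : (4 * ξ / (α * γ)) ^ ((1 : ℝ) / (1 - ξ)) ≤ K)
    (hK3 : γ * α / (2 * K ^ ξ) ≤ 1)
    (u : ℕ → ℝ) (hu0 : u 0 = 0)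
    (hrec : ∀ k, u (k + 1) =
      (1 - γ * (α / ((k : ℝ) + K) ^ ξ) / 2) * u k + (α / ((k : ℝ) + K) ^ ξ) ^ 2) :
    ∀ k, u k ≤ (4 * α / γ) * ((k : ℝ) + K) ^ (-ξ) := by
  obtain ⟨hξ0, hξ1⟩ := hξ
  have hK0 : (0 : ℝ) < K := lt_of_lt_of_le one_pos hK1
  intro k
  induction k with
  | zero =>
    rw [hu0]
    push_cast
    rw [zero_add]
    positivity
  | succ n ih =>
    rw [hrec n]
    have hcast : ((n + 1 : ℕ) : ℝ) + K = ((n : ℝ) + K) + 1 := by push_cast; ring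
    rw [hcast]
    set t : ℝ := (n : ℝ) + K with ht_def
    clear_value t
    have hnn : (0 : ℝ) ≤ (n : ℝ) := Nat.cast_nonneg n
    have ht1 : 1 ≤ t := by rw [ht_def]; linarith
    have ht0 : 0 < t := lt_of_lt_of_le one_pos ht1
    have htK : K ≤ t := by rw [ht_def]; linarith
    have hts : 0 < t ^ ξ := rpow_pos_of_pos ht0 ξ
    -- set s := t ^ (-ξ)
    set s : ℝ := t ^ (-ξ) with hs_def
    clear_value s
    have hs0 : 0 < s := by rw [hs_def]; positivity
    have hαn : α / t ^ ξ = α * s := by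
      rw [hs_def, rpow_neg ht0.le, div_eq_mul_inv]
    -- nonnegativity of the contraction factor
    have hKt : K ^ ξ ≤ t ^ ξ := rpow_le_rpow hK0.le htK hξ0.le
    have hfac : 0 ≤ 1 - γ * (α / t ^ ξ) / 2 := by
      have hKs : 0 < K ^ ξ := rpow_pos_of_pos hK0 ξ
      have : γ * α / (2 * t ^ ξ) ≤ γ * α / (2 * K ^ ξ) := by
        apply div_le_div_of_nonneg_left (by positivity) (by positivity)
        linarith
      have h2 : γ * (α / t ^ ξ) / 2 ≤ 1 := by
        calc γ * (α / t ^ ξ) / 2 = γ * α / (2 * t ^ ξ) := by ring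
          _ ≤ γ * α / (2 * K ^ ξ) := this
          _ ≤ 1 := hK3
      linarith
    -- step
    have step1 : (1 - γ * (α / t ^ ξ) / 2) * u n + (α / t ^ ξ) ^ 2 ≤
        (1 - γ * (α / t ^ ξ) / 2) * ((4 * α / γ) * s) + (α / t ^ ξ) ^ 2 := by
      have := mul_le_mul_of_nonneg_left ih hfac
      linarith
    have step2 : (1 - γ * (α / t ^ ξ) / 2) * ((4 * α / γ) * s) + (α / t ^ ξ) ^ 2 =
        (4 * α / γ) * s - α ^ 2 * s ^ 2 := by
      rw [hαn]
      field_simp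
      ring
    -- key decay inequality
    have key : (4 * α / γ) * s - α ^ 2 * s ^ 2 ≤ (4 * α / γ) * (t + 1) ^ (-ξ) := by
      -- Bernoulli: t^{-ξ} - (t+1)^{-ξ} ≤ ξ * t^{-ξ-1}
      have hber : s - (t + 1) ^ (-ξ) ≤ ξ * t ^ (-ξ - 1) := by
        have h1 : (t + 1) ^ ξ ≤ t ^ ξ * (1 + ξ / t) := by
          have hm1 : (-1 : ℝ) ≤ 1 / t := by
            have : (0:ℝ) ≤ 1 / t := by positivity
            linarith
          have := rpow_one_add_le_one_add_mul_self hm1 hξ0.le hξ1.le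
          calc (t + 1) ^ ξ = (t * (1 + 1 / t)) ^ ξ := by
                rw [mul_add, mul_one, mul_one_div, div_self ht0.ne']
            _ = t ^ ξ * (1 + 1 / t) ^ ξ := mul_rpow ht0.le (by positivity)
            _ ≤ t ^ ξ * (1 + ξ * (1 / t)) := by
                apply mul_le_mul_of_nonneg_left this hts.le
            _ = t ^ ξ * (1 + ξ / t) := by rw [mul_one_div]
        have h1t : 0 < (t + 1) ^ ξ := rpow_pos_of_pos (by linarith) ξ
        have h2 : t ^ (-ξ) * (1 - ξ / t) ≤ (t + 1) ^ (-ξ) := by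
          rw [rpow_neg ht0.le, rpow_neg (by linarith : (0:ℝ) ≤ t + 1)]
          rw [← one_div, ← one_div]
          rw [div_mul_eq_mul_div, one_mul, div_le_div_iff₀ hts (by positivity)]
          calc (1 - ξ / t) * (t + 1) ^ ξ ≤ (1 - ξ / t) * (t ^ ξ * (1 + ξ / t)) := by
                apply mul_le_mul_of_nonneg_left h1
                have : ξ / t ≤ 1 := by
                  rw [div_le_one ht0]; linarith
                linarith
            _ = t ^ ξ * (1 - (ξ/t)^2) := by ring
            _ ≤ t ^ ξ * 1 := by
                apply mul_le_mul_of_nonneg_left _ hts.le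
                nlinarith [sq_nonneg (ξ / t)]
            _ = 1 * t ^ ξ := by ring
        have h3 : t ^ (-ξ) * (ξ / t) = ξ * t ^ (-ξ - 1) := by
          rw [rpow_sub ht0, rpow_one]
          ring
        nlinarith [h2, h3]
      -- ξ * t^{-ξ-1} * (4α/γ) ≤ α² * s²
      have hgrow : (4 * α / γ) * (ξ * t ^ (-ξ - 1)) ≤ α ^ 2 * s ^ 2 := by
        have hB : (0 : ℝ) ≤ 4 * ξ / (α * γ) := by positivity
        have hKpow : 4 * ξ / (α * γ) ≤ K ^ (1 - ξ) := by
          have := rpow_le_rpow (rpow_nonneg hB _) hK2 (by linarith : (0:ℝ) ≤ 1 - ξ)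
          rwa [← rpow_mul hB, one_div_mul_cancel (by linarith : (1:ℝ) - ξ ≠ 0),
            rpow_one] at this
        have htpow : 4 * ξ / (α * γ) ≤ t ^ (1 - ξ) := by
          exact hKpow.trans (rpow_le_rpow hK0.le htK (by linarith))
        -- s² = t^{-2ξ}, relate: α² t^{-2ξ} - (4α/γ) ξ t^{-ξ-1} ≥ 0
        have hss : s ^ 2 = t ^ (-ξ - 1) * t ^ (1 - ξ) := by
          rw [hs_def, ← rpow_add ht0, ← rpow_natCast (t ^ (-ξ)) 2, ← rpow_mul ht0.le]
          norm_num
          ring_nf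
        rw [hss]
        have h4 : (4 * α / γ) * ξ ≤ α ^ 2 * t ^ (1 - ξ) := by
          have heq : (4 * α / γ) * ξ = α ^ 2 * (4 * ξ / (α * γ)) := by
            field_simp
          rw [heq]
          exact mul_le_mul_of_nonneg_left htpow (by positivity)
        have htneg : 0 < t ^ (-ξ - 1) := rpow_pos_of_pos ht0 _
        calc (4 * α / γ) * (ξ * t ^ (-ξ - 1)) = ((4 * α / γ) * ξ) * t ^ (-ξ - 1) := by ring
          _ ≤ (α ^ 2 * t ^ (1 - ξ)) * t ^ (-ξ - 1) := by
              apply mul_le_mul_of_nonneg_right h4 htneg.le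
          _ = α ^ 2 * (t ^ (-ξ - 1) * t ^ (1 - ξ)) := by ring
      have hc : (0 : ℝ) ≤ 4 * α / γ := by positivity
      nlinarith [mul_le_mul_of_nonneg_left hber hc]
    linarith [step1, step2.le, key]
end

section
/- Let c > 1 and let L ≥ 1, C ≥ 0, B ≥ 0, C₁ > 0, A > 0, γ > 0, s ≥ 0. Suppose 0 < α ≤ C₁^c·(c − 1)^c·A^{c−1}·γ / ( L^c·(C² + 2B)^c ). If v, v' are nonnegative reals with v' ≤ v·( 1 + α²·L·(C² + 2B)/C₁ ) − α·γ·v^c + α²·L·(2B·s + A), then v' ≤ ( 1 − α^{2 − 1/c}·A^{1 − 1/c}·γ^{1/c} )·v + α²·L·(2B·s + c·A). -/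
/-- one-step reduction in the smooth sub-exponentially stable case. -/
theorem one_step_reduction_smooth_subexponential
    (c L C B C₁ A γ s α v v' : ℝ)
    (hc : 1 < c) (hL : 1 ≤ L) (hC : 0 ≤ C) (hB : 0 ≤ B) (hC₁ : 0 < C₁)
    (hA : 0 < A) (hγ : 0 < γ) (hs : 0 ≤ s)
    (hαpos : 0 < α)
    (hα : α ≤ C₁ ^ c * (c - 1) ^ c * A ^ (c - 1) * γ / (L ^ c * (C ^ 2 + 2 * B) ^ c))
    (hv : 0 ≤ v) (hv' : 0 ≤ v')
    (h : v' ≤ v * (1 + α ^ 2 * L * (C ^ 2 + 2 * B) / C₁) - α * γ * v ^ c +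
      α ^ 2 * L * (2 * B * s + A)) :
    v' ≤ (1 - α ^ (2 - 1 / c) * A ^ (1 - 1 / c) * γ ^ (1 / c)) * v +
      α ^ 2 * L * (2 * B * s + c * A) := by
  have hc0 : (0:ℝ) < c := lt_trans one_pos hc
  have hc1 : (0:ℝ) ≤ c - 1 := by linarith
  have hL0 : (0:ℝ) < L := lt_of_lt_of_le one_pos hL
  have hD0 : (0:ℝ) ≤ C ^ 2 + 2 * B := by positivity
  rcases eq_or_lt_of_le hD0 with hD | hD
  · exfalso
    rw [← hD, Real.zero_rpow (ne_of_gt hc0), mul_zero, div_zero] at hα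
    linarith
  have hinvc : (0:ℝ) < 1 / c := by positivity
  have hinvc1 : 1 / c < 1 := by rw [div_lt_one hc0]; exact hc
  have h1c : (0:ℝ) ≤ 1 - 1 / c := by linarith
  set K := α ^ (2 - 1 / c) * A ^ (1 - 1 / c) * γ ^ (1 / c) with hKdef
  have hK0 : 0 ≤ K := by positivity
  -- AM-GM step
  have amgm := Real.geom_mean_le_arith_mean2_weighted h1c hinvc.le
      (by positivity : (0:ℝ) ≤ α ^ 2 * A) (by positivity : (0:ℝ) ≤ α * γ * v ^ c)
      (by ring)
  have e1 : (α ^ 2 * A) ^ (1 - 1 / c) = α ^ (2 - 2 / c) * A ^ (1 - 1 / c) := by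
    rw [Real.mul_rpow (by positivity) hA.le, ← Real.rpow_two, ← Real.rpow_mul hαpos.le]
    congr 1
    ring
  have e2 : (α * γ * v ^ c) ^ (1 / c) = α ^ (1 / c) * γ ^ (1 / c) * v := by
    rw [Real.mul_rpow (by positivity) (Real.rpow_nonneg hv c),
        Real.mul_rpow hαpos.le hγ.le, ← Real.rpow_mul hv]
    rw [show c * (1 / c) = 1 by field_simp, Real.rpow_one]
  have e3 : α ^ ((2:ℝ) - 2 / c) * α ^ (1 / c) = α ^ (2 - 1 / c) := by
    rw [← Real.rpow_add hαpos]
    congr 1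
    ring
  have hgm : (α ^ 2 * A) ^ (1 - 1 / c) * (α * γ * v ^ c) ^ (1 / c) = K * v := by
    rw [e1, e2, hKdef, ← e3]
    ring
  rw [hgm] at amgm
  -- amgm : K * v ≤ (1 - 1/c) * (α^2 * A) + 1/c * (α * γ * v ^ c)
  have hAM : c * (K * v) ≤ (c - 1) * (α ^ 2 * A) + α * γ * v ^ c := by
    have := mul_le_mul_of_nonneg_left amgm hc0.le
    calc c * (K * v) ≤ c * ((1 - 1/c) * (α^2 * A) + 1/c * (α * γ * v ^ c)) := this
      _ = (c - 1) * (α ^ 2 * A) + α * γ * v ^ c := by field_simp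
  -- Stepsize condition gives the coefficient bound
  have hEnum : (0:ℝ) ≤ C₁ * (c - 1) * A ^ (1 - 1 / c) * γ ^ (1 / c) :=
    mul_nonneg (mul_nonneg (mul_nonneg hC₁.le hc1) (Real.rpow_nonneg hA.le _))
      (Real.rpow_nonneg hγ.le _)
  have hE0 : (0:ℝ) ≤ C₁ * (c - 1) * A ^ (1 - 1 / c) * γ ^ (1 / c) / (L * (C ^ 2 + 2 * B)) :=
    div_nonneg hEnum (by positivity)
  have hRHS : C₁ ^ c * (c - 1) ^ c * A ^ (c - 1) * γ / (L ^ c * (C ^ 2 + 2 * B) ^ c)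
      = (C₁ * (c - 1) * A ^ (1 - 1 / c) * γ ^ (1 / c) / (L * (C ^ 2 + 2 * B))) ^ c := by
    rw [Real.div_rpow hEnum (by positivity),
        Real.mul_rpow (mul_nonneg (mul_nonneg hC₁.le hc1) (Real.rpow_nonneg hA.le _))
          (Real.rpow_nonneg hγ.le _),
        Real.mul_rpow (mul_nonneg hC₁.le hc1) (Real.rpow_nonneg hA.le _),
        Real.mul_rpow hC₁.le hc1,
        Real.mul_rpow hL0.le hD.le,
        ← Real.rpow_mul hA.le, ← Real.rpow_mul hγ.le]
    rw [show (1 - 1 / c) * c = c - 1 by field_simp, show 1 / c * c = 1 by field_simp,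
        Real.rpow_one]
  have hE : α ^ (1 / c) ≤ C₁ * (c - 1) * A ^ (1 - 1 / c) * γ ^ (1 / c) / (L * (C ^ 2 + 2 * B)) := by
    calc α ^ (1 / c)
        ≤ (C₁ ^ c * (c - 1) ^ c * A ^ (c - 1) * γ / (L ^ c * (C ^ 2 + 2 * B) ^ c)) ^ (1 / c) :=
          Real.rpow_le_rpow hαpos.le hα hinvc.le
      _ = _ := by
          rw [hRHS, ← Real.rpow_mul hE0, mul_one_div_cancel (ne_of_gt hc0), Real.rpow_one]
  have hα2 : α ^ 2 = α ^ ((2:ℝ) - 1 / c) * α ^ (1 / c) := by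
    rw [← Real.rpow_add hαpos, show (2:ℝ) - 1/c + 1/c = 2 by ring, Real.rpow_two]
  have hcoef : α ^ 2 * L * (C ^ 2 + 2 * B) / C₁ ≤ (c - 1) * K := by
    have h1 : α ^ (2 - 1/c) * α ^ (1 / c) * (L * (C ^ 2 + 2 * B) / C₁)
        ≤ α ^ (2 - 1/c) * (C₁ * (c - 1) * A ^ (1 - 1 / c) * γ ^ (1 / c) / (L * (C ^ 2 + 2 * B)))
          * (L * (C ^ 2 + 2 * B) / C₁) := by
      apply mul_le_mul_of_nonneg_right
        (mul_le_mul_of_nonneg_left hE (Real.rpow_nonneg hαpos.le _))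
      positivity
    calc α ^ 2 * L * (C ^ 2 + 2 * B) / C₁
        = α ^ (2 - 1/c) * α ^ (1 / c) * (L * (C ^ 2 + 2 * B) / C₁) := by
          rw [hα2]; ring
      _ ≤ _ := h1
      _ = (c - 1) * K := by
          rw [hKdef]
          field_simp
  -- combine everything
  have hK2 : α ^ 2 * L * (C ^ 2 + 2 * B) / C₁ * v ≤ (c - 1) * K * v :=
    mul_le_mul_of_nonneg_right hcoef hv
  have hLA : (c - 1) * (α ^ 2 * A) ≤ (c - 1) * (α ^ 2 * (L * A)) := by
    apply mul_le_mul_of_nonneg_left _ hc1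
    apply mul_le_mul_of_nonneg_left _ (by positivity)
    nlinarith
  linarith [h, hK2, hAM, hLA]
end

section
/- Let c ≥ 1, α > 0, β > 0, and ξ' ∈ (0,1); set d := 2c/(2c − 1). Let K be a real number with K ≥ 1, K ≥ ( 2ξ'/(α^{2 − 1/c}·(2c − 1)·β) )^{1/(1 − ξ')}, and β·α^{2 − 1/c}/K^{ξ'} ≤ 1. Define the sequence u₀ = 0, u_{k+1} = ( 1 − β·α^{2 − 1/c}·(k + K)^{−ξ'} )·u_k + α²·(k + K)^{−d·ξ'}. Then for all natural numbers k, u_k ≤ (2·α^{1/c}/β)·(k + K)^{−(d − 1)·ξ'}. -/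
/-!
Write `η k = β α^(2-1/c) (k+K)^(-ξ')`, `v k = (k+K)^(-s)` with `s = ξ'/(2c-1) = (d-1)ξ'`, and
`C = 2α^(1/c)/β`. Since `α² = (C/2) β α^(2-1/c)`, the recursion reads
`u (k+1) = (1 - η k) u k + (C/2) η k v k`, and the bound `u k ≤ C v k` propagates by induction
as long as `η k ≤ 1` and `v` loses at most the fraction `η k / 2` per step. By Bernoulli's
inequality `v` loses at most `s/(k+K)` per step, and the lower bound on `K` is exactly what makes
`s/(k+K) ≤ η k / 2`.
-/

open Real

theorem one_sub_mul_le_rpow_one_add_neg {x s : ℝ} (hx : -1 < x) (hs₀ : 0 ≤ s) (hs₁ : s ≤ 1) :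
    1 - s * x ≤ (1 + x) ^ (-s) := by
  have hsx : 0 < 1 + s * x := by
    rcases hs₀.eq_or_lt with rfl | hs
    · norm_num
    · nlinarith [mul_pos hs (by linarith : 0 < 1 + x)]
  calc 1 - s * x ≤ (1 + s * x)⁻¹ := by
        rw [← one_div, le_div_iff₀ hsx]; nlinarith [sq_nonneg (s * x)]
    _ ≤ ((1 + x) ^ s)⁻¹ :=
        inv_anti₀ (rpow_pos_of_pos (by linarith) s) (rpow_one_add_le_one_add_mul_self hx.le hs₀ hs₁)
    _ = (1 + x) ^ (-s) := (rpow_neg (by linarith) s).symm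

theorem rpow_neg_sub_rpow_neg_add_one_le {t s : ℝ} (ht : 0 < t) (hs₀ : 0 ≤ s) (hs₁ : s ≤ 1) :
    t ^ (-s) - (t + 1) ^ (-s) ≤ s / t * t ^ (-s) := by
  have h : t ^ (-s) * (1 - s * t⁻¹) ≤ (t + 1) ^ (-s) := by
    calc t ^ (-s) * (1 - s * t⁻¹) ≤ t ^ (-s) * (1 + t⁻¹) ^ (-s) := by
          gcongr
          exact one_sub_mul_le_rpow_one_add_neg (by linarith [inv_pos.2 ht]) hs₀ hs₁
      _ = (t + 1) ^ (-s) := by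
          rw [← mul_rpow ht.le (by positivity), mul_add, mul_inv_cancel₀ ht.ne', mul_one]
  linarith [show t ^ (-s) * (1 - s * t⁻¹) = t ^ (-s) - s / t * t ^ (-s) by ring]

theorem le_mul_of_le_one_sub_mul_add {u v η : ℕ → ℝ} {C : ℝ} (hC : 0 ≤ C)
    (hη : ∀ k, η k ≤ 1) (hv : ∀ k, v k - v (k + 1) ≤ η k / 2 * v k) (h₀ : u 0 ≤ C * v 0)
    (hu : ∀ k, u (k + 1) ≤ (1 - η k) * u k + C / 2 * η k * v k) :
    ∀ k, u k ≤ C * v k := by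
  intro k
  induction k with
  | zero => exact h₀
  | succ k ih =>
    have hcontract := mul_le_mul_of_nonneg_left ih (sub_nonneg.2 (hη k))
    have hdecay := mul_le_mul_of_nonneg_left (hv k) hC
    linarith [hu k]

theorem div_le_half_mul_rpow_neg {a s ξ K t : ℝ} (ha : 0 ≤ a) (hK : 0 < K) (hKt : K ≤ t)
    (hξ : ξ ≤ 1) (h : 2 * s ≤ a * K ^ (1 - ξ)) : s / t ≤ a / 2 * t ^ (-ξ) := by
  have ht : 0 < t := hK.trans_le hKt
  have hgrow : a * K ^ (1 - ξ) ≤ a * (t ^ (-ξ) * t) := by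
    rw [← rpow_add_one ht.ne', neg_add_eq_sub]
    exact mul_le_mul_of_nonneg_left (rpow_le_rpow hK.le hKt (by linarith)) ha
  rw [div_le_iff₀ ht]
  linarith

theorem rpow_neg_sub_rpow_neg_add_one_le_mul_rpow_neg {a s ξ K t : ℝ} (ha : 0 ≤ a) (hK : 0 < K)
    (hKt : K ≤ t) (hξ : ξ ≤ 1) (hs₀ : 0 ≤ s) (hs₁ : s ≤ 1) (h : 2 * s ≤ a * K ^ (1 - ξ)) :
    t ^ (-s) - (t + 1) ^ (-s) ≤ a * t ^ (-ξ) / 2 * t ^ (-s) := by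
  have ht : 0 < t := hK.trans_le hKt
  calc t ^ (-s) - (t + 1) ^ (-s) ≤ s / t * t ^ (-s) :=
        rpow_neg_sub_rpow_neg_add_one_le ht hs₀ hs₁
    _ ≤ a / 2 * t ^ (-ξ) * t ^ (-s) := by
        gcongr
        exact div_le_half_mul_rpow_neg ha hK hKt hξ h
    _ = a * t ^ (-ξ) / 2 * t ^ (-s) := by ring

theorem mul_rpow_neg_le_one {a ξ K t : ℝ} (ha : 0 ≤ a) (hK : 0 < K) (hKt : K ≤ t) (hξ : 0 ≤ ξ)
    (h : a / K ^ ξ ≤ 1) : a * t ^ (-ξ) ≤ 1 :=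
  calc a * t ^ (-ξ) ≤ a * K ^ (-ξ) :=
        mul_le_mul_of_nonneg_left (rpow_le_rpow_of_nonpos hK hKt (neg_nonpos.2 hξ)) ha
    _ ≤ 1 := by rwa [rpow_neg hK.le, ← div_eq_mul_inv]

/-- induction lemma, smooth sub-exponential case, with
`d := 2c/(2c-1)`. -/
theorem auxiliary_sequence_bound_subexponential
    (c α β ξ' : ℝ) (hc : 1 ≤ c) (hα : 0 < α) (hβ : 0 < β)
    (hξ' : ξ' ∈ Set.Ioo (0 : ℝ) 1) (K : ℝ) (hK1 : 1 ≤ K)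
    (hK2 : (2 * ξ' / (α ^ (2 - 1 / c) * (2 * c - 1) * β)) ^ ((1 : ℝ) / (1 - ξ')) ≤ K)
    (hK3 : β * α ^ (2 - 1 / c) / K ^ ξ' ≤ 1)
    (u : ℕ → ℝ) (hu0 : u 0 = 0)
    (hrec : ∀ k, u (k + 1) =
      (1 - β * α ^ (2 - 1 / c) * ((k : ℝ) + K) ^ (-ξ')) * u k +
        α ^ 2 * ((k : ℝ) + K) ^ (-(2 * c / (2 * c - 1) * ξ'))) :
    ∀ k, u k ≤ (2 * α ^ (1 / c) / β) * ((k : ℝ) + K) ^ (-((2 * c / (2 * c - 1) - 1) * ξ')) := by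
  obtain ⟨hξ₀, hξ₁⟩ := hξ'
  have hK : 0 < K := one_pos.trans_le hK1
  have hc' : 0 < 2 * c - 1 := by linarith
  generalize hs : (2 * c / (2 * c - 1) - 1) * ξ' = s
  have hs' : s = ξ' / (2 * c - 1) := by rw [← hs]; field_simp; ring
  have hs₁ : s ≤ 1 := by rw [hs', div_le_one hc']; linarith
  have hstep : 2 * s ≤ β * α ^ (2 - 1 / c) * K ^ (1 - ξ') := by
    rw [one_div (1 - ξ'), rpow_inv_le_iff_of_pos (by positivity) hK.le (by linarith)] at hK2
    calc 2 * s = β * α ^ (2 - 1 / c) * (2 * ξ' / (α ^ (2 - 1 / c) * (2 * c - 1) * β)) := by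
          rw [hs']; field_simp
      _ ≤ β * α ^ (2 - 1 / c) * K ^ (1 - ξ') := by gcongr
  have hcoef : 2 * α ^ (1 / c) / β / 2 * (β * α ^ (2 - 1 / c)) = α ^ 2 := by
    calc 2 * α ^ (1 / c) / β / 2 * (β * α ^ (2 - 1 / c)) = α ^ (1 / c + (2 - 1 / c)) := by
          rw [rpow_add hα]; field_simp
      _ = α ^ 2 := by rw [add_sub_cancel, rpow_two]
  have hKk (k : ℕ) : K ≤ k + K := le_add_of_nonneg_left k.cast_nonneg
  refine le_mul_of_le_one_sub_mul_add (η := fun k ↦ β * α ^ (2 - 1 / c) * ((k : ℝ) + K) ^ (-ξ'))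
    (v := fun k ↦ ((k : ℝ) + K) ^ (-s)) (by positivity)
    (fun k ↦ mul_rpow_neg_le_one (by positivity) hK (hKk k) hξ₀.le hK3) (fun k ↦ ?_) ?_
    (fun k ↦ ?_)
  · simp only [Nat.cast_succ, add_right_comm _ (1 : ℝ) K]
    exact rpow_neg_sub_rpow_neg_add_one_le_mul_rpow_neg (by positivity) hK (hKk k) hξ₁.le
      (by rw [hs']; positivity) hs₁ hstep
  · simp only [hu0, Nat.cast_zero, zero_add]
    positivity
  · rw [hrec k, show -(2 * c / (2 * c - 1) * ξ') = -ξ' + -s by rw [← hs]; ring,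
      rpow_add (by positivity), ← hcoef]
    exact le_of_eq (by ring)
end

section
/- Let E be a finite-dimensional real inner product space, (Ω, 𝔉, ℙ) a probability space with filtration (ℱ_k), x* ∈ E, x₀ ∈ E deterministic. Let F : E → E satisfy F(x*) = 0 and ‖F(y) − F(z)‖ ≤ C·‖y − z‖ for all y, z. Let V : E → ℝ be nonnegative and differentiable with: V(z) ≤ V(y) + ⟪∇V(y), z − y⟫ + (L/2)·‖z − y‖² for all y, z (L > 0); ⟪∇V(y), F(y)⟫ ≤ −γ·V(y) for all y (γ > 0); and C₁·‖y − x*‖² ≤ V(y) ≤ C₂·‖y − x*‖² for all y (C₁, C₂ > 0). Let (x_k) be adapted and square-integrable with x_{k+1} = x_k + α·(F(x_k) + w_k), where α > 0 is constant, and (w_k) are square-integrable with 𝔼[w_k | ℱ_k] = 0 a.s. and 𝔼[‖w_k‖² | ℱ_k] ≤ A + B·‖x_k‖² a.s. (A, B ≥ 0). Assume α·L·(C² + 2B)/C₁ ≤ γ/2 and α·γ ≤ 2. Then for every k, 𝔼[‖x_k − x*‖²] ≤ (C₂/C₁)·‖x₀ − x*‖²·(1 − αγ/2)^k + 2αL·(A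 + 2B‖x*‖²)/(γ·C₁). -/
/-! Smoothness of `V` gives the pathwise descent inequality
`V(x_{k+1}) ≤ (1 - αγ) V(x_k) + α ⟪∇V(x_k), w_k⟫ + L α² (‖F(x_k)‖² + ‖w_k‖²)`.
Since `∇V(x_k)` is `ℱ_k`-measurable and square integrable (`‖∇V‖² ≤ 2 L V`), the noise term has
mean zero, and the conditional variance bound together with the stepsize condition lets half of
the drift absorb the second-order terms:
`𝔼 V(x_{k+1}) ≤ (1 - αγ/2) 𝔼 V(x_k) + L α² (A + 2 B ‖x*‖²)`.
Unrolling this recursion and sandwiching `V` between `C₁ ‖· - x*‖²` and `C₂ ‖· - x*‖²` gives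
the bound. -/

open MeasureTheory RealInnerProductSpace

section Deterministic

variable {E : Type*}

theorem sq_norm_le_two_mul_sq_norm_sub_add [SeminormedAddCommGroup E] (y a : E) :
    ‖y‖ ^ 2 ≤ 2 * ‖y - a‖ ^ 2 + 2 * ‖a‖ ^ 2 := by
  calc ‖y‖ ^ 2 ≤ (‖y - a‖ + ‖a‖) ^ 2 := by
        gcongr; simpa using norm_add_le (y - a) a
    _ ≤ 2 * ‖y - a‖ ^ 2 + 2 * ‖a‖ ^ 2 := by linarith [add_sq_le (a := ‖y - a‖) (b := ‖a‖)]

theorem descent_bound_le_of_stepsize_le [SeminormedAddCommGroup E] {y xstar : E}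
    {v L α γ C C₁ A B : ℝ} (hL : 0 ≤ L) (hα : 0 ≤ α) (hB : 0 ≤ B) (hC₁ : 0 < C₁)
    (hlow : C₁ * ‖y - xstar‖ ^ 2 ≤ v) (hstep : α * L * (C ^ 2 + 2 * B) / C₁ ≤ γ / 2) :
    (1 - α * γ) * v + L * α ^ 2 * C ^ 2 * ‖y - xstar‖ ^ 2 + L * α ^ 2 * (A + B * ‖y‖ ^ 2) ≤
      (1 - α * γ / 2) * v + L * α ^ 2 * (A + 2 * B * ‖xstar‖ ^ 2) := by
  rw [div_le_iff₀ hC₁] at hstep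
  have hαγ : 0 ≤ α * γ / 2 := by
    have : 0 ≤ γ / 2 * C₁ := le_trans (by positivity) hstep
    have : 0 ≤ γ := by nlinarith
    positivity
  have hy := mul_le_mul_of_nonneg_left (sq_norm_le_two_mul_sq_norm_sub_add y xstar)
    (by positivity : 0 ≤ L * α ^ 2 * B)
  have habsorb : α * (α * L * (C ^ 2 + 2 * B)) * ‖y - xstar‖ ^ 2 ≤ α * γ / 2 * v := by
    calc α * (α * L * (C ^ 2 + 2 * B)) * ‖y - xstar‖ ^ 2
        ≤ α * (γ / 2 * C₁) * ‖y - xstar‖ ^ 2 := by gcongr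
      _ = α * γ / 2 * (C₁ * ‖y - xstar‖ ^ 2) := by ring
      _ ≤ α * γ / 2 * v := by gcongr
  nlinarith

variable [NormedAddCommGroup E] [InnerProductSpace ℝ E]

theorem sq_norm_le_of_forall_le_add_inner {V : E → ℝ} {L : ℝ} {y g : E} (hL : 0 < L)
    (hV : ∀ z, 0 ≤ V z) (hsmooth : ∀ z, V z ≤ V y + ⟪g, z - y⟫ + L / 2 * ‖z - y‖ ^ 2) :
    ‖g‖ ^ 2 ≤ 2 * L * V y := by
  -- evaluate the quadratic upper bound at its minimiser `y - L⁻¹ • g`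
  have h := (hV _).trans (hsmooth (y - L⁻¹ • g))
  rw [sub_sub_cancel_left, inner_neg_right, norm_neg, real_inner_smul_right,
    real_inner_self_eq_norm_sq, norm_smul, mul_pow, Real.norm_of_nonneg (inv_nonneg.2 hL.le)] at h
  field_simp at h
  nlinarith

theorem apply_add_smul_le_of_forall_le_add_inner {V : E → ℝ} {L α γ : ℝ} {y g f w : E}
    (hL : 0 ≤ L) (hα : 0 ≤ α)
    (hsmooth : ∀ z, V z ≤ V y + ⟪g, z - y⟫ + L / 2 * ‖z - y‖ ^ 2)
    (hdrift : ⟪g, f⟫ ≤ -γ * V y) :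
    V (y + α • (f + w)) ≤ (1 - α * γ) * V y + α * ⟪g, w⟫ + L * α ^ 2 * (‖f‖ ^ 2 + ‖w‖ ^ 2) := by
  have h := hsmooth (y + α • (f + w))
  rw [add_sub_cancel_left, real_inner_smul_right, inner_add_right, norm_smul, mul_pow,
    Real.norm_of_nonneg hα] at h
  have hfw : ‖f + w‖ ^ 2 ≤ 2 * (‖f‖ ^ 2 + ‖w‖ ^ 2) :=
    (pow_le_pow_left₀ (norm_nonneg _) (norm_add_le f w) 2).trans add_sq_le
  have := mul_le_mul_of_nonneg_left hdrift hα
  have := mul_le_mul_of_nonneg_left hfw (by positivity : 0 ≤ L / 2 * α ^ 2)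
  nlinarith

end Deterministic

theorem le_pow_mul_add_div_of_le_mul_add {e : ℕ → ℝ} {q c : ℝ} (hq0 : 0 ≤ q) (hq1 : q < 1)
    (hc : 0 ≤ c) (h : ∀ k, e (k + 1) ≤ q * e k + c) (k : ℕ) :
    e k ≤ q ^ k * e 0 + c / (1 - q) := by
  have h1q : 0 < 1 - q := by linarith
  induction k with
  | zero => simpa using div_nonneg hc h1q.le
  | succ k ih =>
    calc e (k + 1) ≤ q * (q ^ k * e 0 + c / (1 - q)) + c := by nlinarith [h k]
      _ = q ^ (k + 1) * e 0 + c / (1 - q) := by field_simp; ring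

namespace MeasureTheory

variable {Ω E : Type*} {m m0 : MeasurableSpace Ω} {P : Measure Ω} [NormedAddCommGroup E]

theorem memLp_two_of_sq_norm_le {f : Ω → E} {h : Ω → ℝ} (hf : AEStronglyMeasurable f P)
    (hh : Integrable h P) (hle : ∀ ω, ‖f ω‖ ^ 2 ≤ h ω) : MemLp f 2 P :=
  (memLp_two_iff_integrable_sq_norm hf).2 <|
    hh.mono' (hf.norm.pow 2) (.of_forall fun ω => by simpa using hle ω)

theorem MemLp.integrable_sq_norm_sub [IsFiniteMeasure P] {X : Ω → E} (hX : MemLp X 2 P)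
    (a : E) : Integrable (fun ω => ‖X ω - a‖ ^ 2) P :=
  (hX.sub (memLp_const a)).norm.integrable_sq

theorem MemLp.integrable_comp_of_le_sq_norm_sub [IsFiniteMeasure P] {V : E → ℝ} {xstar : E}
    {C₂ : ℝ} (hVcont : Continuous V) (hVnonneg : ∀ y, 0 ≤ V y)
    (hVle : ∀ y, V y ≤ C₂ * ‖y - xstar‖ ^ 2) {X : Ω → E} (hX : MemLp X 2 P) :
    Integrable (fun ω => V (X ω)) P :=
  ((hX.integrable_sq_norm_sub xstar).const_mul C₂).mono'
    (hVcont.comp_aestronglyMeasurable hX.1)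
    (.of_forall fun ω => by simpa [abs_of_nonneg (hVnonneg _)] using hVle (X ω))

theorem integral_le_integral_of_condExp_le (hm : m ≤ m0) [SigmaFinite (P.trim hm)]
    {f g : Ω → ℝ} (hg : Integrable g P) (hfg : P[f|m] ≤ᵐ[P] g) :
    ∫ ω, f ω ∂P ≤ ∫ ω, g ω ∂P := by
  rw [← integral_condExp hm]
  exact integral_mono_ae integrable_condExp hg hfg

variable [InnerProductSpace ℝ E]

theorem MemLp.integrable_inner {f g : Ω → E} (hf : MemLp f 2 P) (hg : MemLp g 2 P) :
    Integrable (fun ω => ⟪f ω, g ω⟫) P :=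
  (L2.integrable_inner (𝕜 := ℝ) (hf.toLp f) (hg.toLp g)).congr <| by
    filter_upwards [hf.coeFn_toLp, hg.coeFn_toLp] with ω hfω hgω
    rw [hfω, hgω]

theorem integral_inner_eq_zero_of_condExp_eq_zero [CompleteSpace E]
    (hm : m ≤ m0) [SigmaFinite (P.trim hm)]
    {g h : Ω → E} (hg : StronglyMeasurable[m] g) (hgh : Integrable (fun ω => ⟪g ω, h ω⟫) P)
    (hh : Integrable h P) (hmean : P[h|m] =ᵐ[P] 0) :
    ∫ ω, ⟪g ω, h ω⟫ ∂P = 0 := by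
  rw [← integral_condExp hm]
  refine integral_eq_zero_of_ae <|
    (condExp_bilin_of_stronglyMeasurable_left (innerSL ℝ) hg hgh hh).trans ?_
  filter_upwards [hmean] with ω hω
  simp [hω]

variable [CompleteSpace E] [SecondCountableTopology E] [MeasurableSpace E] [BorelSpace E]

theorem StronglyMeasurable.gradient_comp (V : E → ℝ) {X : Ω → E}
    (hX : StronglyMeasurable[m] X) : StronglyMeasurable[m] (fun ω => gradient V (X ω)) :=
  (((InnerProductSpace.toDual ℝ E).symm.continuous.measurable.comp
    (measurable_fderiv ℝ V)).comp hX.measurable).stronglyMeasurable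

section DescentStep

variable {V : E → ℝ} {F : E → E} {xstar : E} {L α γ C C₂ A B : ℝ}
  {X W : Ω → E}

theorem integral_comp_add_smul_le [IsFiniteMeasure P] (hm : m ≤ m0) (hL : 0 < L) (hα : 0 ≤ α)
    (hVnonneg : ∀ y, 0 ≤ V y) (hVcont : Continuous V) (hVle : ∀ y, V y ≤ C₂ * ‖y - xstar‖ ^ 2)
    (hsmooth : ∀ y z, V z ≤ V y + ⟪gradient V y, z - y⟫ + L / 2 * ‖z - y‖ ^ 2)
    (hdrift : ∀ y, ⟪gradient V y, F y⟫ ≤ -γ * V y) (hF : ∀ y, ‖F y‖ ≤ C * ‖y - xstar‖)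
    (hX : StronglyMeasurable[m] X) (hXL2 : MemLp X 2 P) (hWL2 : MemLp W 2 P)
    (hmean : P[W|m] =ᵐ[P] 0)
    (hvar : ∀ᵐ ω ∂P, P[fun ω' => ‖W ω'‖ ^ 2|m] ω ≤ A + B * ‖X ω‖ ^ 2) :
    ∫ ω, V (X ω + α • (F (X ω) + W ω)) ∂P ≤
      ∫ ω, ((1 - α * γ) * V (X ω) + L * α ^ 2 * C ^ 2 * ‖X ω - xstar‖ ^ 2 +
        L * α ^ 2 * (A + B * ‖X ω‖ ^ 2)) ∂P := by
  set a := fun ω => (1 - α * γ) * V (X ω) + L * α ^ 2 * C ^ 2 * ‖X ω - xstar‖ ^ 2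
  have hVX : Integrable (fun ω => V (X ω)) P :=
    hXL2.integrable_comp_of_le_sq_norm_sub hVcont hVnonneg hVle
  have ha : Integrable a P :=
    (hVX.const_mul _).add ((hXL2.integrable_sq_norm_sub xstar).const_mul _)
  have hG : MemLp (fun ω => gradient V (X ω)) 2 P :=
    memLp_two_of_sq_norm_le ((hX.gradient_comp V).mono hm).aestronglyMeasurable
      (hVX.const_mul (2 * L)) fun ω => sq_norm_le_of_forall_le_add_inner hL hVnonneg (hsmooth _)
  have hGW : Integrable (fun ω => ⟪gradient V (X ω), W ω⟫) P := hG.integrable_inner hWL2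
  have haGW : Integrable (fun ω => a ω + α * ⟪gradient V (X ω), W ω⟫) P :=
    ha.add (hGW.const_mul α)
  have hW2 : Integrable (fun ω => ‖W ω‖ ^ 2) P := hWL2.norm.integrable_sq
  have hvar_int : Integrable (fun ω => A + B * ‖X ω‖ ^ 2) P :=
    (integrable_const A).add (hXL2.norm.integrable_sq.const_mul B)
  have hpt : ∀ ω, V (X ω + α • (F (X ω) + W ω)) ≤
      a ω + α * ⟪gradient V (X ω), W ω⟫ + L * α ^ 2 * ‖W ω‖ ^ 2 := fun ω => by
    have hdescent := apply_add_smul_le_of_forall_le_add_inner (w := W ω) hL.le hα (hsmooth (X ω))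
      (hdrift (X ω))
    have hFsq : ‖F (X ω)‖ ^ 2 ≤ C ^ 2 * ‖X ω - xstar‖ ^ 2 := by
      rw [← mul_pow]; exact pow_le_pow_left₀ (norm_nonneg _) (hF _) 2
    have := mul_le_mul_of_nonneg_left hFsq (by positivity : 0 ≤ L * α ^ 2)
    simp only [a]
    nlinarith
  calc ∫ ω, V (X ω + α • (F (X ω) + W ω)) ∂P
      ≤ ∫ ω, (a ω + α * ⟪gradient V (X ω), W ω⟫ + L * α ^ 2 * ‖W ω‖ ^ 2) ∂P :=
        integral_mono_of_nonneg (.of_forall fun _ => hVnonneg _)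
          (haGW.add (hW2.const_mul _)) (.of_forall hpt)
    _ = ∫ ω, a ω ∂P + α * ∫ ω, ⟪gradient V (X ω), W ω⟫ ∂P +
          L * α ^ 2 * ∫ ω, ‖W ω‖ ^ 2 ∂P := by
        rw [integral_add haGW (hW2.const_mul _), integral_add ha (hGW.const_mul α),
          integral_const_mul, integral_const_mul]
    _ ≤ ∫ ω, a ω ∂P + α * 0 + L * α ^ 2 * ∫ ω, (A + B * ‖X ω‖ ^ 2) ∂P := by
        rw [integral_inner_eq_zero_of_condExp_eq_zero hm (hX.gradient_comp V) hGW
          (hWL2.integrable one_le_two) hmean]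
        gcongr _ + _ + _ * ?_
        exact integral_le_integral_of_condExp_le hm hvar_int hvar
    _ = _ := by
        rw [integral_add ha (hvar_int.const_mul _), integral_const_mul]
        ring

theorem integral_comp_add_smul_le_one_sub_half_mul [IsProbabilityMeasure P] (hm : m ≤ m0)
    (hL : 0 < L) (hα : 0 ≤ α) {C₁ : ℝ} (hB : 0 ≤ B) (hC₁ : 0 < C₁)
    (hVnonneg : ∀ y, 0 ≤ V y) (hVcont : Continuous V)
    (hgrow : ∀ y, C₁ * ‖y - xstar‖ ^ 2 ≤ V y ∧ V y ≤ C₂ * ‖y - xstar‖ ^ 2)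
    (hsmooth : ∀ y z, V z ≤ V y + ⟪gradient V y, z - y⟫ + L / 2 * ‖z - y‖ ^ 2)
    (hdrift : ∀ y, ⟪gradient V y, F y⟫ ≤ -γ * V y) (hF : ∀ y, ‖F y‖ ≤ C * ‖y - xstar‖)
    (hstep : α * L * (C ^ 2 + 2 * B) / C₁ ≤ γ / 2)
    (hX : StronglyMeasurable[m] X) (hXL2 : MemLp X 2 P) (hWL2 : MemLp W 2 P)
    (hmean : P[W|m] =ᵐ[P] 0)
    (hvar : ∀ᵐ ω ∂P, P[fun ω' => ‖W ω'‖ ^ 2|m] ω ≤ A + B * ‖X ω‖ ^ 2) :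
    ∫ ω, V (X ω + α • (F (X ω) + W ω)) ∂P ≤
      (1 - α * γ / 2) * ∫ ω, V (X ω) ∂P + L * α ^ 2 * (A + 2 * B * ‖xstar‖ ^ 2) := by
  have hVX : Integrable (fun ω => V (X ω)) P :=
    hXL2.integrable_comp_of_le_sq_norm_sub hVcont hVnonneg fun y => (hgrow y).2
  calc _ ≤ _ := integral_comp_add_smul_le hm hL hα hVnonneg hVcont (fun y => (hgrow y).2)
        hsmooth hdrift hF hX hXL2 hWL2 hmean hvar
    _ ≤ ∫ ω, ((1 - α * γ / 2) * V (X ω) + L * α ^ 2 * (A + 2 * B * ‖xstar‖ ^ 2)) ∂P :=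
        integral_mono (((hVX.const_mul _).add ((hXL2.integrable_sq_norm_sub xstar).const_mul _)).add
            (((integrable_const A).add (hXL2.norm.integrable_sq.const_mul B)).const_mul _))
          ((hVX.const_mul _).add (integrable_const _)) fun ω =>
          descent_bound_le_of_stepsize_le hL.le hα hB hC₁ (hgrow (X ω)).1 hstep
    _ = _ := by
        rw [integral_add (hVX.const_mul _) (integrable_const _), integral_const_mul]
        simp

end DescentStep

end MeasureTheory

theorem finite_time_bound_constant_stepsize_smooth_exponential_general
    {E : Type*} [NormedAddCommGroup E] [InnerProductSpace ℝ E] [FiniteDimensional ℝ E]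
    [MeasurableSpace E] [BorelSpace E]
    {Ω : Type*} {m0 : MeasurableSpace Ω} {P : Measure Ω} [IsProbabilityMeasure P]
    (ℱ : Filtration ℕ m0)
    (xstar x0 : E)
    (F : E → E) (C : ℝ) (hFstar : F xstar = 0)
    (hF : ∀ y z, ‖F y - F z‖ ≤ C * ‖y - z‖)
    (V : E → ℝ) (hVnonneg : ∀ y, 0 ≤ V y) (hVdiff : Differentiable ℝ V)
    (L γ C₁ C₂ : ℝ) (hL : 0 < L) (hγ : 0 < γ) (hC₁ : 0 < C₁)
    (hsmooth : ∀ y z, V z ≤ V y + ⟪gradient V y, z - y⟫ + (L / 2) * ‖z - y‖ ^ 2)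
    (hdrift : ∀ y, ⟪gradient V y, F y⟫ ≤ -γ * V y)
    (hgrow : ∀ y, C₁ * ‖y - xstar‖ ^ 2 ≤ V y ∧ V y ≤ C₂ * ‖y - xstar‖ ^ 2)
    (x w : ℕ → Ω → E) (α : ℝ) (hα : 0 < α)
    (hx0 : ∀ ω, x 0 ω = x0)
    (hadapted : Adapted ℱ x)
    (hxL2 : ∀ k, MemLp (x k) 2 P)
    (hwL2 : ∀ k, MemLp (w k) 2 P)
    (A B : ℝ) (hA : 0 ≤ A) (hB : 0 ≤ B)
    (hw_mean : ∀ k, P[w k | ℱ k] =ᵐ[P] 0)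
    (hw_var : ∀ k, ∀ᵐ ω ∂P,
      (P[fun ω' => ‖w k ω'‖ ^ 2 | ℱ k]) ω ≤ A + B * ‖x k ω‖ ^ 2)
    (hrec : ∀ k ω, x (k + 1) ω = x k ω + α • (F (x k ω) + w k ω))
    (hstep : α * L * (C ^ 2 + 2 * B) / C₁ ≤ γ / 2) (hαγ : α * γ ≤ 2) :
    ∀ k, (∫ ω, ‖x k ω - xstar‖ ^ 2 ∂P) ≤
      (C₂ / C₁) * ‖x0 - xstar‖ ^ 2 * (1 - α * γ / 2) ^ k +
        2 * α * L * (A + 2 * B * ‖xstar‖ ^ 2) / (γ * C₁) := by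
  intro k
  have hFlin : ∀ y, ‖F y‖ ≤ C * ‖y - xstar‖ := fun y => by simpa [hFstar] using hF y xstar
  have hcontract : ∀ j, ∫ ω, V (x (j + 1) ω) ∂P ≤
      (1 - α * γ / 2) * ∫ ω, V (x j ω) ∂P + L * α ^ 2 * (A + 2 * B * ‖xstar‖ ^ 2) := fun j => by
    simp only [hrec j]
    exact integral_comp_add_smul_le_one_sub_half_mul (ℱ.le j) hL hα.le hB hC₁ hVnonneg
      hVdiff.continuous hgrow hsmooth hdrift hFlin hstep (hadapted j).stronglyMeasurable
      (hxL2 j) (hwL2 j) (hw_mean j) (hw_var j)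
  have hgeo := le_pow_mul_add_div_of_le_mul_add (e := fun j => ∫ ω, V (x j ω) ∂P)
    (by linarith) (by linarith [mul_pos hα hγ]) (by positivity) hcontract k
  have hlow : C₁ * ∫ ω, ‖x k ω - xstar‖ ^ 2 ∂P ≤ ∫ ω, V (x k ω) ∂P := by
    rw [← integral_const_mul]
    exact integral_mono (((hxL2 k).integrable_sq_norm_sub xstar).const_mul _)
      ((hxL2 k).integrable_comp_of_le_sq_norm_sub hVdiff.continuous hVnonneg
        fun y => (hgrow y).2) fun ω => (hgrow _).1
  simp only [hx0, integral_const, probReal_univ, one_smul] at hgeo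
  refine le_of_mul_le_mul_left ?_ hC₁
  calc C₁ * ∫ ω, ‖x k ω - xstar‖ ^ 2 ∂P
      ≤ (1 - α * γ / 2) ^ k * V x0 +
          L * α ^ 2 * (A + 2 * B * ‖xstar‖ ^ 2) / (1 - (1 - α * γ / 2)) := hlow.trans hgeo
    _ ≤ (1 - α * γ / 2) ^ k * (C₂ * ‖x0 - xstar‖ ^ 2) +
          L * α ^ 2 * (A + 2 * B * ‖xstar‖ ^ 2) / (1 - (1 - α * γ / 2)) := by
        gcongr
        · exact pow_nonneg (by linarith) k
        · exact (hgrow x0).2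
    _ = _ := by field_simp; ring

/-- constant-stepsize finite-time bound, smooth exponentially stable case:
the iterates of `x_{k+1} = x_k + α (F(x_k) + w_k)` converge exponentially fast in mean square
to a ball of radius `O(α)` around `x*`. -/
theorem finite_time_bound_constant_stepsize_smooth_exponential
    {E : Type*} [NormedAddCommGroup E] [InnerProductSpace ℝ E] [FiniteDimensional ℝ E]
    [MeasurableSpace E] [BorelSpace E]
    {Ω : Type*} {m0 : MeasurableSpace Ω} {P : Measure Ω} [IsProbabilityMeasure P]
    (ℱ : Filtration ℕ m0)
    (xstar x0 : E)
    (F : E → E) (C : ℝ) (hFstar : F xstar = 0)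
    (hF : ∀ y z, ‖F y - F z‖ ≤ C * ‖y - z‖)
    (V : E → ℝ) (hVnonneg : ∀ y, 0 ≤ V y) (hVdiff : Differentiable ℝ V)
    (L γ C₁ C₂ : ℝ) (hL : 0 < L) (hγ : 0 < γ) (hC₁ : 0 < C₁) (hC₂ : 0 < C₂)
    (hsmooth : ∀ y z, V z ≤ V y + ⟪gradient V y, z - y⟫ + (L / 2) * ‖z - y‖ ^ 2)
    (hdrift : ∀ y, ⟪gradient V y, F y⟫ ≤ -γ * V y)
    (hgrow : ∀ y, C₁ * ‖y - xstar‖ ^ 2 ≤ V y ∧ V y ≤ C₂ * ‖y - xstar‖ ^ 2)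
    (x w : ℕ → Ω → E) (α : ℝ) (hα : 0 < α)
    (hx0 : ∀ ω, x 0 ω = x0)
    (hadapted : Adapted ℱ x)
    (hxL2 : ∀ k, MemLp (x k) 2 P)
    (hwL2 : ∀ k, MemLp (w k) 2 P)
    (A B : ℝ) (hA : 0 ≤ A) (hB : 0 ≤ B)
    (hw_mean : ∀ k, P[w k | ℱ k] =ᵐ[P] 0)
    (hw_var : ∀ k, ∀ᵐ ω ∂P,
      (P[fun ω' => ‖w k ω'‖ ^ 2 | ℱ k]) ω ≤ A + B * ‖x k ω‖ ^ 2)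
    (hrec : ∀ k ω, x (k + 1) ω = x k ω + α • (F (x k ω) + w k ω))
    (hstep : α * L * (C ^ 2 + 2 * B) / C₁ ≤ γ / 2) (hαγ : α * γ ≤ 2) :
    ∀ k, (∫ ω, ‖x k ω - xstar‖ ^ 2 ∂P) ≤
      (C₂ / C₁) * ‖x0 - xstar‖ ^ 2 * (1 - α * γ / 2) ^ k +
        2 * α * L * (A + 2 * B * ‖xstar‖ ^ 2) / (γ * C₁) :=
  finite_time_bound_constant_stepsize_smooth_exponential_general ℱ xstar x0 F C hFstar hF V hVnonneg
    hVdiff L γ C₁ C₂ hL hγ hC₁ hsmooth hdrift hgrow x w α hα hx0 hadapted hxL2 hwL2 A B hA hB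
    hw_mean hw_var hrec hstep hαγ
end

section
/- For all real numbers x₁, x₂ with x₁ ≠ 0, the following inequality holds: −2·|x₁|·(2x₁² + x₂²)/√(4x₁² + 3x₂²) + (x₁² − x₂²) ≤ −( √(4x₁² + 3x₂²) − |x₁| )² / 15. -/
/-- negative-drift verification for Artstein's circle example:
for `V(x₁,x₂) = √(4x₁² + 3x₂²) − |x₁|`, the drift satisfies `V̇ ≤ −V²/15` wherever
`x₁ ≠ 0`. -/
theorem artstein_circle_negative_drift (x₁ x₂ : ℝ) (h : x₁ ≠ 0) :
    -2 * |x₁| * (2 * x₁ ^ 2 + x₂ ^ 2) / Real.sqrt (4 * x₁ ^ 2 + 3 * x₂ ^ 2) +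
        (x₁ ^ 2 - x₂ ^ 2) ≤
      -(Real.sqrt (4 * x₁ ^ 2 + 3 * x₂ ^ 2) - |x₁|) ^ 2 / 15 := by
  set s := Real.sqrt (4 * x₁ ^ 2 + 3 * x₂ ^ 2) with hs
  have hx : (0:ℝ) < x₁ ^ 2 := by positivity
  have hpos : (0:ℝ) < 4 * x₁ ^ 2 + 3 * x₂ ^ 2 := by nlinarith [sq_nonneg x₂]
  have hspos : 0 < s := Real.sqrt_pos.mpr hpos
  have hs2 : s ^ 2 = 4 * x₁ ^ 2 + 3 * x₂ ^ 2 := Real.sq_sqrt hpos.le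
  have ha : |x₁| ^ 2 = x₁ ^ 2 := sq_abs x₁
  have hapos : 0 < |x₁| := abs_pos.mpr h
  rw [div_add' _ _ _ hspos.ne', div_le_div_iff₀ hspos (by norm_num : (0:ℝ) < 15)]
  nlinarith [mul_nonneg (mul_nonneg (sq_nonneg (s - |x₁|)) hspos.le) hapos.le,
    mul_nonneg (sq_nonneg (s - |x₁|)) hspos.le, sq_nonneg (s - |x₁|),
    mul_pos hspos hapos]
end
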